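/- arXiv:2603.19111 — 9 statements merged into one kernel-verified Lean document; each statement's English description precedes it below -/
import Mathlib

section
/- Suppose 0 < a < b < ∞, 0 < p < q < ∞, and ρ, τ ∈ (0,∞). If a sequence {a_j} (j ∈ ℕ) satisfies a ≤ a_j ≤ b and a_{j+1}^{1/q} ≤ ρ τ^j a_j^{1/p} for all j ∈ ℕ, then a_1^{1 - p/q} ρ^p τ^{pq/(q-p)} ≥ 1. -/
set_option maxHeartbeats 1000000 in
/-- The iterative lemma: if `0 < a < b`, `0 < p < q`, `ρ, τ ∈ (0,∞)` and the sequence `{a j}`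
satisfies `a ≤ a j ≤ b` and `a (j+1) ^ (1/q) ≤ ρ τ^j (a j)^(1/p)` for all `j ≥ 1`, then
`a 1 ^ (1 - p/q) * ρ^p * τ^(pq/(q-p)) ≥ 1`. -/
theorem iterative_lemma (a b p q ρ τ : ℝ) (ha : 0 < a) (hab : a < b)
    (hp : 0 < p) (hpq : p < q) (hρ : 0 < ρ) (hτ : 0 < τ)
    (aseq : ℕ → ℝ)
    (hbound : ∀ j : ℕ, 1 ≤ j → a ≤ aseq j ∧ aseq j ≤ b)
    (hrec : ∀ j : ℕ, 1 ≤ j → (aseq (j + 1)) ^ (1 / q) ≤ ρ * τ ^ j * (aseq j) ^ (1 / p)) :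
    1 ≤ (aseq 1) ^ (1 - p / q) * ρ ^ p * τ ^ (p * q / (q - p)) := by
  by_contra hcon
  push_neg at hcon
  have hq : 0 < q := hp.trans hpq
  have hqp : 0 < q - p := sub_pos.2 hpq
  set r : ℝ := q / p with hr_def
  have hr : 1 < r := (one_lt_div hp).2 hpq
  have hr0 : 0 < r := lt_trans one_pos hr
  have hr1 : 0 < r - 1 := sub_pos.2 hr
  set C : ℝ := q * Real.log ρ with hC
  set D : ℝ := q * Real.log τ with hD
  set L : ℕ → ℝ := fun j => Real.log (aseq j) with hLdef
  have hpos : ∀ j : ℕ, 1 ≤ j → 0 < aseq j := fun j hj => lt_of_lt_of_le ha (hbound j hj).1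
  -- log recurrence
  have hL : ∀ j : ℕ, 1 ≤ j → L (j + 1) ≤ r * L j + (C + (j : ℝ) * D) := by
    intro j hj
    have h1 := hrec j hj
    have hA : 0 < aseq (j + 1) := hpos _ (hj.trans (Nat.le_succ j))
    have hB : 0 < aseq j := hpos j hj
    have hlog := Real.log_le_log (Real.rpow_pos_of_pos hA _) h1
    rw [Real.log_rpow hA, Real.log_mul (by positivity) (by positivity),
      Real.log_mul (ne_of_gt hρ) (by positivity), Real.log_pow, Real.log_rpow hB] at hlog
    have h2 := mul_le_mul_of_nonneg_left hlog hq.le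
    show L (j + 1) ≤ r * L j + (C + (j : ℝ) * D)
    rw [hr_def, hC, hD]
    have e1 : q * (1 / q * L (j + 1)) = L (j + 1) := by field_simp
    have e2 : q * (Real.log ρ + (j : ℝ) * Real.log τ + 1 / p * L j)
        = q / p * L j + (q * Real.log ρ + (j : ℝ) * (q * Real.log τ)) := by
      field_simp; ring
    calc L (j + 1) = q * (1 / q * L (j + 1)) := e1.symm
      _ ≤ q * (Real.log ρ + (j : ℝ) * Real.log τ + 1 / p * L j) := h2
      _ = q / p * L j + (q * Real.log ρ + (j : ℝ) * (q * Real.log τ)) := e2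
  set α : ℝ := -D / (r - 1) with hα
  set β : ℝ := (α - C) / (r - 1) with hβ
  have eα : α * (r - 1) = -D := by rw [hα]; field_simp
  have eβ : β * (r - 1) = α - C := by rw [hβ]; field_simp
  have haff : ∀ k : ℝ, r * (α * k + β) + (C + k * D) = α * (k + 1) + β := by
    intro k; linear_combination k * eα + eβ
  -- key iteration
  have key : ∀ n : ℕ, L (n + 1) - (α * ((n : ℝ) + 1) + β) ≤ r ^ n * (L 1 - (α + β)) := by
    intro n
    induction n with
    | zero => simp
    | succ n ih =>
      have h1 := hL (n + 1) (Nat.le_add_left 1 n)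
      have h2 : r * (L (n + 1) - (α * ((n : ℝ) + 1) + β)) ≤ r * (r ^ n * (L 1 - (α + β))) :=
        mul_le_mul_of_nonneg_left ih hr0.le
      have h3 := haff ((n : ℝ) + 1)
      push_cast at h1 ⊢
      rw [pow_succ]
      nlinarith [h1, h2, h3]
  -- from the contradiction hypothesis
  have hx1 : 0 < aseq 1 := hpos 1 le_rfl
  have hlog1 : (1 - p / q) * L 1 + p * Real.log ρ + p * q / (q - p) * Real.log τ < 0 := by
    have h0 : (0:ℝ) < (aseq 1) ^ (1 - p / q) * ρ ^ p * τ ^ (p * q / (q - p)) := by positivity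
    have h1 := Real.log_neg h0 hcon
    rw [Real.log_mul (by positivity) (by positivity), Real.log_mul (by positivity) (by positivity),
      Real.log_rpow hx1, Real.log_rpow hρ, Real.log_rpow hτ] at h1
    show (1 - p / q) * Real.log (aseq 1) + p * Real.log ρ + p * q / (q - p) * Real.log τ < 0
    linarith
  have hlog2 : (q - p) ^ 2 * L 1 + p * q * (q - p) * Real.log ρ + p * q ^ 2 * Real.log τ < 0 := by
    have e : q * (q - p) * ((1 - p / q) * L 1 + p * Real.log ρ + p * q / (q - p) * Real.log τ)
        = (q - p) ^ 2 * L 1 + p * q * (q - p) * Real.log ρ + p * q ^ 2 * Real.log τ := by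
      field_simp
    have h8 := mul_neg_of_pos_of_neg (by positivity : (0:ℝ) < q * (q - p)) hlog1
    linarith [h8, e.ge, e.le]
  have hM : L 1 - (α + β) < 0 := by
    have hne2 : q / p - 1 ≠ 0 := by rw [← hr_def]; exact hr1.ne'
    have hfin : (q - p) ^ 2 * (L 1 - (α + β))
        = (q - p) ^ 2 * L 1 + p * q * (q - p) * Real.log ρ + p * q ^ 2 * Real.log τ := by
      rw [hβ, hα, hC, hD, hr_def]
      field_simp
      ring
    nlinarith [hfin, hlog2, sq_nonneg (q - p)]
  -- linear upper bound for r^n * c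
  set c : ℝ := α + β - L 1 with hc
  have hcpos : 0 < c := by rw [hc]; linarith
  set K : ℝ := |α| + |β - Real.log a| + 1 with hK
  have hKpos : 0 < K := by positivity
  have hgrow : ∀ n : ℕ, c * r ^ n ≤ K * ((n : ℝ) + 1) := by
    intro n
    have h1 := key n
    have h2 : Real.log a ≤ L (n + 1) :=
      Real.log_le_log ha (hbound (n + 1) (Nat.le_add_left 1 n)).1
    have h3 : r ^ n * c ≤ α * ((n : ℝ) + 1) + (β - Real.log a) := by
      have hcc : r ^ n * c = -(r ^ n * (L 1 - (α + β))) := by rw [hc]; ring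
      linarith [h1, h2, hcc.le, hcc.ge]
    have h4 : α * ((n : ℝ) + 1) ≤ |α| * ((n : ℝ) + 1) :=
      mul_le_mul_of_nonneg_right (le_abs_self α) (by positivity)
    have h5 : β - Real.log a ≤ |β - Real.log a| := le_abs_self _
    have h6 : |α| * ((n : ℝ) + 1) + |β - Real.log a| ≤ K * ((n : ℝ) + 1) := by
      rw [hK]
      nlinarith [mul_nonneg (abs_nonneg (β - Real.log a)) (Nat.cast_nonneg n : (0:ℝ) ≤ n),
        (Nat.cast_nonneg n : (0:ℝ) ≤ n)]
    linarith [h3, h4, h5, h6]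
  -- Bernoulli to reach a contradiction
  set ε : ℝ := r - 1 with hε
  have hεpos : 0 < ε := hr1
  have hbern : ∀ m : ℕ, 1 + (m : ℝ) * ε ≤ r ^ m := by
    intro m
    have := one_add_mul_le_pow (a := ε) (by linarith) m
    have hre : 1 + ε = r := by rw [hε]; ring
    rwa [hre] at this
  set m : ℕ := ⌈3 * K / (c * ε ^ 2)⌉₊ + 1 with hm
  have hm1 : (1 : ℝ) ≤ (m : ℝ) := by
    rw [hm]; push_cast
    linarith [(Nat.cast_nonneg ⌈3 * K / (c * ε ^ 2)⌉₊ : (0:ℝ) ≤ ⌈3 * K / (c * ε ^ 2)⌉₊)]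
  have hmgt : 3 * K / (c * ε ^ 2) < (m : ℝ) := by
    rw [hm]; push_cast
    calc 3 * K / (c * ε ^ 2) ≤ (⌈3 * K / (c * ε ^ 2)⌉₊ : ℝ) := Nat.le_ceil _
      _ < (⌈3 * K / (c * ε ^ 2)⌉₊ : ℝ) + 1 := by linarith
  have hcε : 0 < c * ε ^ 2 := by positivity
  have hmK : 3 * K < (m : ℝ) * (c * ε ^ 2) := (div_lt_iff₀ hcε).1 hmgt
  have h1 := hgrow (2 * m)
  have hsq : (1 + (m : ℝ) * ε) * (1 + (m : ℝ) * ε) ≤ r ^ m * r ^ m :=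
    mul_self_le_mul_self (by positivity) (hbern m)
  have hpow : r ^ (2 * m) = r ^ m * r ^ m := by rw [two_mul, pow_add]
  have h2 : ((m : ℝ) * ε) ^ 2 ≤ r ^ (2 * m) := by
    rw [hpow]
    nlinarith [hsq, mul_nonneg (Nat.cast_nonneg m : (0:ℝ) ≤ m) hεpos.le]
  have hcast : ((2 * m : ℕ) : ℝ) = 2 * (m : ℝ) := by push_cast; ring
  rw [hcast] at h1
  nlinarith [h1, h2, hmK, hm1, hcpos, hKpos, mul_le_mul_of_nonneg_left h2 hcpos.le]
end

section
/- Let (X,μ) be a measure space with μ(X) < ∞ and let p, q be bounded variable exponents on X (measurable functions with positive essential infimum and finite essential supremum) satisfying ess inf (q − p) > 0. Then L^{q(·)}(X,μ) ⊆ L^{p(·)}(X,μ), and for every u ∈ L^{q(·)}(X,μ), ‖u‖_{L^{p(·)}} ≤ 2^{1/p^-} · max{‖1‖_{L^{t'(·)}}^{1/p^+}, ‖1‖_{L^{t'(·)}}^{1/p^-}} · ‖u‖_{L^{q(·)}}, where t := q/p and t' is the conjugate exponent of t (1/t + 1/t' = 1). -/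
open MeasureTheory Metric ENNReal

noncomputable section

/-- The semi-modular `∫ f(x)^{p(x)} dμ` of an `ℝ≥0∞`-valued function. -/
def modE {X : Type*} [MeasurableSpace X] (μ : Measure X) (p : X → ℝ) (f : X → ℝ≥0∞) : ℝ≥0∞ :=
  ∫⁻ x, f x ^ p x ∂μ

/-- The Luxemburg quasi-norm associated to the variable exponent `p`. -/
def luxE {X : Type*} [MeasurableSpace X] (μ : Measure X) (p : X → ℝ) (f : X → ℝ≥0∞) : ℝ≥0∞ :=
  sInf {l : ℝ≥0∞ | 0 < l ∧ l ≠ ⊤ ∧ modE μ p (fun x => f x / l) ≤ 1}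

/-- The Luxemburg quasi-norm of a real-valued function. -/
def luxR {X : Type*} [MeasurableSpace X] (μ : Measure X) (p : X → ℝ) (u : X → ℝ) : ℝ≥0∞ :=
  luxE μ p (fun x => (‖u x‖₊ : ℝ≥0∞))

/-- `g` is a scalar `s(·)`-gradient of `u` on the set `E`. -/
def IsSGradOn {X : Type*} [MeasurableSpace X] [PseudoMetricSpace X] (μ : Measure X)
    (E : Set X) (s : X → ℝ) (u : X → ℝ) (g : X → ℝ≥0∞) : Prop :=
  Measurable g ∧ ∃ N : Set X, N ⊆ E ∧ μ N = 0 ∧ ∀ x ∈ E \ N, ∀ y ∈ E \ N,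
    ENNReal.ofReal |u x - u y| ≤
      ENNReal.ofReal (dist x y ^ s x) * g x + ENNReal.ofReal (dist x y ^ s y) * g y

/-- `{g k}` is a vector (fractional) `s(·)`-gradient of `u` on the set `E`. -/
def IsVGradOn {X : Type*} [MeasurableSpace X] [PseudoMetricSpace X] (μ : Measure X)
    (E : Set X) (s : X → ℝ) (u : X → ℝ) (g : ℤ → X → ℝ≥0∞) : Prop :=
  (∀ k, Measurable (g k)) ∧ ∃ N : Set X, N ⊆ E ∧ μ N = 0 ∧
    ∀ x ∈ E \ N, ∀ y ∈ E \ N, ∀ k : ℤ,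
      (2 : ℝ) ^ (-(k : ℝ) - 1) ≤ dist x y → dist x y < (2 : ℝ) ^ (-(k : ℝ)) →
      ENNReal.ofReal |u x - u y| ≤
        ENNReal.ofReal (dist x y ^ s x) * g k x + ENNReal.ofReal (dist x y ^ s y) * g k y

/-- Pointwise `ℓ^{q}`-norm of a sequence, `q ∈ (0,∞]`. -/
def seqNormE (q : ℝ≥0∞) (v : ℤ → ℝ≥0∞) : ℝ≥0∞ :=
  if q = ⊤ then ⨆ k, v k else (∑' k, v k ^ q.toReal) ^ (1 / q.toReal)

/-- The mixed `L^{p(·)}(ℓ^{q(·)})` quasi-norm. -/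
def LpEllNorm {X : Type*} [MeasurableSpace X] (μ : Measure X) (p : X → ℝ) (q : X → ℝ≥0∞)
    (g : ℤ → X → ℝ≥0∞) : ℝ≥0∞ :=
  luxE μ p (fun x => seqNormE (q x) (fun k => g k x))

/-- The semi-modular of the mixed `ℓ^{q(·)}(L^{p(·)})` space. -/
def ellLpMod {X : Type*} [MeasurableSpace X] (μ : Measure X) (p : X → ℝ) (q : X → ℝ≥0∞)
    (g : ℤ → X → ℝ≥0∞) : ℝ≥0∞ :=
  ∑' k : ℤ, sInf {l : ℝ≥0∞ | 0 < l ∧ l ≠ ⊤ ∧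
    modE μ p (fun x => g k x / l ^ (1 / q x).toReal) ≤ 1}

/-- The mixed `ℓ^{q(·)}(L^{p(·)})` quasi-norm. -/
def ellLpNorm {X : Type*} [MeasurableSpace X] (μ : Measure X) (p : X → ℝ) (q : X → ℝ≥0∞)
    (g : ℤ → X → ℝ≥0∞) : ℝ≥0∞ :=
  sInf {l : ℝ≥0∞ | 0 < l ∧ l ≠ ⊤ ∧ ellLpMod μ p q (fun k x => g k x / l) ≤ 1}

/-- Quasi-seminorm of the homogeneous variable Hajłasz–Sobolev space `Ṁ^{s(·),p(·)}(E)`. -/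
def MNormOn {X : Type*} [MeasurableSpace X] [PseudoMetricSpace X] (μ : Measure X)
    (E : Set X) (p s : X → ℝ) (u : X → ℝ) : ℝ≥0∞ :=
  sInf ((fun g => luxE (μ.restrict E) p g) '' {g | IsSGradOn μ E s u g})

/-- Quasi-seminorm of the homogeneous Hajłasz–Triebel–Lizorkin space `Ṁ^{s(·)}_{p(·),q(·)}(E)`. -/
def TLNormOn {X : Type*} [MeasurableSpace X] [PseudoMetricSpace X] (μ : Measure X)
    (E : Set X) (p : X → ℝ) (q : X → ℝ≥0∞) (s : X → ℝ) (u : X → ℝ) : ℝ≥0∞ :=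
  sInf ((fun g => LpEllNorm (μ.restrict E) p q g) '' {g | IsVGradOn μ E s u g})

/-- Quasi-seminorm of the homogeneous Hajłasz–Besov space `Ṅ^{s(·)}_{p(·),q(·)}(E)`. -/
def BNormOn {X : Type*} [MeasurableSpace X] [PseudoMetricSpace X] (μ : Measure X)
    (E : Set X) (p : X → ℝ) (q : X → ℝ≥0∞) (s : X → ℝ) (u : X → ℝ) : ℝ≥0∞ :=
  sInf ((fun g => ellLpNorm (μ.restrict E) p q g) '' {g | IsVGradOn μ E s u g})

/-!
Write `t = q/p` and `t'` for its conjugate exponent. If `λ` is admissible for the Luxemburg norm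
of `u` in `L^{q(·)}` and `m` for that of `1` in `L^{t'(·)}`, Young's inequality at each point,
`|u/λ|^p m⁻¹ ≤ |u/λ|^q + m^{-t'}`, integrates to `∫ |u/λ|^p ≤ 2m`. As
`(2^{1/p⁻} max(m^{1/p⁺}, m^{1/p⁻}))^{p(x)} ≥ 2m`, dividing `u/λ` further by this constant brings
the `p(·)`-modular down to `1`. Taking the infimum over `λ`, and then letting `m` decrease to
`‖1‖_{L^{t'(·)}}` (the constant is continuous in `m`), gives the norm bound; Young's inequality
with `λ = m = 1` gives finiteness of the `p(·)`-modular.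
-/

open Filter Topology

namespace ENNReal

lemma le_of_forall_lt_lt_top {φ : ℝ≥0∞ → ℝ≥0∞} {a L : ℝ≥0∞} (ha : a ≠ ⊤)
    (hφ : ContinuousAt φ a) (h : ∀ m, a < m → m < ⊤ → L ≤ φ m) : L ≤ φ a := by
  have : NeBot (𝓝[>] a) := nhdsGT_neBot_of_exists_gt ⟨⊤, ha.lt_top⟩
  refine ge_of_tendsto (hφ.tendsto.mono_left (nhdsWithin_le_nhds (s := Set.Ioi a))) ?_
  filter_upwards [Ioo_mem_nhdsGT ha.lt_top] with m hm using h m hm.1 hm.2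

lemma rpow_mul_le_rpow_add_rpow (a b : ℝ≥0∞) {p q r : ℝ} (hp : 0 < p)
    (hqr : (q / p).HolderConjugate r) : a ^ p * b ≤ a ^ q + b ^ r := by
  have hpow : (a ^ p) ^ (q / p) = a ^ q := by
    rw [← rpow_mul, mul_div_cancel₀ _ hp.ne']
  refine (young_inequality _ b hqr).trans (add_le_add ?_ ?_)
  · rw [hpow]
    exact div_le_of_le_mul (le_mul_of_one_le_right' (one_le_ofReal.2 hqr.lt.le))
  · exact div_le_of_le_mul (le_mul_of_one_le_right' (one_le_ofReal.2 hqr.symm.lt.le))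

lemma le_max_rpow_one_div_rpow (m : ℝ≥0∞) {a b s : ℝ} (ha : 0 < a) (has : a ≤ s)
    (hsb : s ≤ b) : m ≤ max (m ^ (1 / b)) (m ^ (1 / a)) ^ s := by
  have hs : 0 < s := ha.trans_le has
  rcases le_total m 1 with hm | hm
  · calc m = m ^ (1 : ℝ) := (rpow_one m).symm
      _ ≤ m ^ (1 / b * s) :=
          rpow_le_rpow_of_exponent_ge hm (by rwa [one_div_mul_eq_div, div_le_one (hs.trans_le hsb)])
      _ ≤ max (m ^ (1 / b)) (m ^ (1 / a)) ^ s := by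
          rw [rpow_mul]; exact rpow_le_rpow (le_max_left _ _) hs.le
  · calc m = m ^ (1 : ℝ) := (rpow_one m).symm
      _ ≤ m ^ (1 / a * s) :=
          rpow_le_rpow_of_exponent_le hm (by rwa [one_div_mul_eq_div, one_le_div ha])
      _ ≤ max (m ^ (1 / b)) (m ^ (1 / a)) ^ s := by
          rw [rpow_mul]; exact rpow_le_rpow (le_max_right _ _) hs.le

lemma two_mul_le_ofReal_two_rpow_mul_max_rpow (m : ℝ≥0∞) {a b s : ℝ} (ha : 0 < a)
    (has : a ≤ s) (hsb : s ≤ b) :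
    2 * m ≤ (ENNReal.ofReal (2 ^ (1 / a)) * max (m ^ (1 / b)) (m ^ (1 / a))) ^ s := by
  have hs : 0 < s := ha.trans_le has
  have h2 : (2 : ℝ≥0∞) ≤ ENNReal.ofReal (2 ^ (1 / a)) ^ s := by
    rw [ofReal_rpow_of_nonneg (by positivity) hs.le, ← Real.rpow_mul zero_le_two]
    calc (2 : ℝ≥0∞) = ENNReal.ofReal ((2 : ℝ) ^ (1 : ℝ)) := by norm_num
      _ ≤ _ := ofReal_le_ofReal <| Real.rpow_le_rpow_of_exponent_le one_le_two <| by
          rwa [one_div_mul_eq_div, one_le_div ha]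
  rw [mul_rpow_of_nonneg _ _ hs.le]
  exact mul_le_mul' h2 (le_max_rpow_one_div_rpow m ha has hsb)

end ENNReal

section Modular

variable {X : Type*} [MeasurableSpace X] {μ : Measure X} {p q r : X → ℝ} {f : X → ℝ≥0∞}

lemma ae_essInf_le_of_pos {g : X → ℝ} (h : 0 < essInf g μ) : ∀ᵐ x ∂μ, essInf g μ ≤ g x := by
  refine ae_essInf_le ?_
  by_contra hb
  -- otherwise `essInf g μ` would be the junk value `sSup ∅ = 0`
  have hempty : {a : ℝ | ∀ᵐ x ∂μ, a ≤ g x} = ∅ :=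
    Set.eq_empty_iff_forall_notMem.2 fun a ha => hb ⟨a, ha⟩
  have : essInf g μ = 0 := by rw [essInf, liminf_eq]; simp_rw [hempty]; exact Real.sSup_empty
  exact h.ne' this

lemma modE_mono (hp : ∀ᵐ x ∂μ, 0 ≤ p x) {g : X → ℝ≥0∞} (hfg : ∀ x, f x ≤ g x) :
    modE μ p f ≤ modE μ p g :=
  lintegral_mono_ae <| hp.mono fun x hx => rpow_le_rpow (hfg x) hx

lemma modE_div_le {K B : ℝ≥0∞} (hK : K ≠ 0) (h : ∀ᵐ x ∂μ, 0 ≤ p x ∧ K ≤ B ^ p x) :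
    modE μ p (fun x => f x / B) ≤ modE μ p f / K := by
  calc modE μ p (fun x => f x / B) ≤ ∫⁻ x, f x ^ p x * K⁻¹ ∂μ := by
        refine lintegral_mono_ae (h.mono fun x hx => ?_)
        rw [div_rpow_of_nonneg _ _ hx.1, div_eq_mul_inv]
        exact mul_le_mul' le_rfl (ENNReal.inv_le_inv.2 hx.2)
    _ = modE μ p f / K := lintegral_mul_const' _ _ (inv_ne_top.2 hK)

lemma modE_mul_le_add (hf : Measurable f) (hq : Measurable q)
    (hpqr : ∀ᵐ x ∂μ, 0 < p x ∧ (q x / p x).HolderConjugate (r x)) (c : ℝ≥0∞) :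
    modE μ p f * c ≤ modE μ q f + modE μ r (fun _ => c) :=
  calc modE μ p f * c ≤ ∫⁻ x, f x ^ p x * c ∂μ := lintegral_mul_const_le _ _
    _ ≤ ∫⁻ x, (f x ^ q x + c ^ r x) ∂μ := lintegral_mono_ae <|
        hpqr.mono fun _ hx => ENNReal.rpow_mul_le_rpow_add_rpow _ _ hx.1 hx.2
    _ = modE μ q f + modE μ r (fun _ => c) := lintegral_add_left (hf.pow hq) _

lemma luxE_le {l : ℝ≥0∞} (hl0 : 0 < l) (hlt : l ≠ ⊤) (h : modE μ p (fun x => f x / l) ≤ 1) :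
    luxE μ p f ≤ l :=
  sInf_le ⟨hl0, hlt, h⟩

lemma modE_div_le_one_of_luxE_lt (hp : ∀ᵐ x ∂μ, 0 ≤ p x) {l : ℝ≥0∞} (hl : luxE μ p f < l) :
    modE μ p (fun x => f x / l) ≤ 1 := by
  obtain ⟨l', ⟨-, -, hl'⟩, hl'l⟩ := sInf_lt_iff.1 hl
  exact (modE_mono hp fun x => ENNReal.div_le_div_left hl'l.le _).trans hl'

lemma luxE_ne_top {Q : ℝ} (hQ : 0 < Q) (hq : ∀ᵐ x ∂μ, Q ≤ q x) (h : modE μ q f ≠ ⊤) :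
    luxE μ q f ≠ ⊤ := by
  set l := max 1 (modE μ q f ^ (1 / Q))
  have hl1 : 1 ≤ l := le_max_left _ _
  have hlt : l ≠ ⊤ := max_ne_top one_ne_top (rpow_ne_top_of_nonneg (by positivity) h)
  have hlQ : modE μ q f ≤ l ^ Q := by
    calc modE μ q f = (modE μ q f ^ (1 / Q)) ^ Q := by
          rw [← rpow_mul, one_div_mul_cancel hQ.ne', rpow_one]
      _ ≤ l ^ Q := rpow_le_rpow (le_max_right _ _) hQ.le
  refine ne_top_of_le_ne_top hlt (luxE_le (zero_lt_one.trans_le hl1) hlt ?_)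
  calc modE μ q (fun x => f x / l) ≤ modE μ q f / l ^ Q :=
        modE_div_le (rpow_pos (zero_lt_one.trans_le hl1) hlt).ne' <| hq.mono fun x hx =>
          ⟨hQ.le.trans hx, rpow_le_rpow_of_exponent_le hl1 hx⟩
    _ ≤ 1 := div_le_of_le_mul (by rwa [one_mul])

lemma luxE_le_mul_luxE_of_modE {B : ℝ≥0∞} (hB0 : B ≠ 0) (hBt : B ≠ ⊤)
    (h : ∀ l, 0 < l → l ≠ ⊤ → modE μ q (fun x => f x / l) ≤ 1 →
      modE μ p (fun x => f x / (l * B)) ≤ 1) :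
    luxE μ p f ≤ B * luxE μ q f := by
  rw [mul_comm, ← ENNReal.div_le_iff_le_mul (Or.inl hB0) (Or.inl hBt)]
  refine le_sInf fun l ⟨hl0, hlt, hl⟩ => ENNReal.div_le_of_le_mul ?_
  exact luxE_le (ENNReal.mul_pos hl0.ne' hB0) (mul_ne_top hlt hBt) (h l hl0 hlt hl)

lemma luxE_le_mul_luxE (hf : Measurable f) (hq : Measurable q)
    (hpqr : ∀ᵐ x ∂μ, 0 < p x ∧ (q x / p x).HolderConjugate (r x)) {m B : ℝ≥0∞}
    (hm : luxE μ r (fun _ => 1) < m) (hmt : m ≠ ⊤) (hB0 : B ≠ 0) (hBt : B ≠ ⊤)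
    (hB : ∀ᵐ x ∂μ, 2 * m ≤ B ^ p x) :
    luxE μ p f ≤ B * luxE μ q f := by
  have hm0 : m ≠ 0 := (zero_le.trans_lt hm).ne'
  have hr : modE μ r (fun _ => m⁻¹) ≤ 1 := by
    simpa only [one_div] using
      modE_div_le_one_of_luxE_lt (hpqr.mono fun x hx => hx.2.symm.nonneg) hm
  refine luxE_le_mul_luxE_of_modE hB0 hBt fun l hl0 hlt hl => ?_
  have hyoung : modE μ p (fun x => f x / l) ≤ 2 * m := by
    have h := (modE_mul_le_add (hf.div_const l) hq hpqr m⁻¹).trans (add_le_add hl hr)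
    rw [one_add_one_eq_two, ← ENNReal.le_div_iff_mul_le (Or.inl (ENNReal.inv_ne_zero.2 hmt))
      (Or.inl (inv_ne_top.2 hm0))] at h
    rwa [div_eq_mul_inv, inv_inv] at h
  calc modE μ p (fun x => f x / (l * B)) = modE μ p (fun x => f x / l / B) := by
        simp only [div_eq_mul_inv, ENNReal.mul_inv (Or.inl hl0.ne') (Or.inl hlt), mul_assoc]
    _ ≤ modE μ p (fun x => f x / l) / (2 * m) :=
        modE_div_le (mul_ne_zero two_ne_zero hm0) <|
          (hpqr.and hB).mono fun x hx => ⟨hx.1.1.le, hx.2⟩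
    _ ≤ 1 := div_le_of_le_mul (by rwa [one_mul])

lemma luxE_le_ofReal_two_rpow_mul_max_rpow_mul_luxE (hf : Measurable f) (hq : Measurable q)
    (hpqr : ∀ᵐ x ∂μ, 0 < p x ∧ (q x / p x).HolderConjugate (r x)) {a b : ℝ} (ha : 0 < a)
    (hab : ∀ᵐ x ∂μ, a ≤ p x ∧ p x ≤ b) {m : ℝ≥0∞} (hm : luxE μ r (fun _ => 1) < m)
    (hmt : m < ⊤) :
    luxE μ p f ≤ ENNReal.ofReal (2 ^ (1 / a)) * max (m ^ (1 / b)) (m ^ (1 / a)) * luxE μ q f := by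
  have hm0 : m ≠ 0 := (zero_le.trans_lt hm).ne'
  refine luxE_le_mul_luxE hf hq hpqr hm hmt.ne ?_ ?_ ?_
  · exact mul_ne_zero (ofReal_pos.2 (by positivity)).ne'
      (lt_max_of_lt_left (rpow_pos (pos_iff_ne_zero.2 hm0) hmt.ne)).ne'
  · exact mul_ne_top ofReal_ne_top
      (max_ne_top (rpow_ne_top_of_ne_zero hm0 hmt.ne) (rpow_ne_top_of_ne_zero hm0 hmt.ne))
  · exact hab.mono fun _ hx => ENNReal.two_mul_le_ofReal_two_rpow_mul_max_rpow m ha hx.1 hx.2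

end Modular

theorem Lq_subset_Lp_of_finite_measure_general {X : Type*} [MeasurableSpace X]
    (μ : Measure X) [IsFiniteMeasure μ]
    (p q : X → ℝ) (hqm : Measurable q)
    (hp : 0 < essInf p μ) (hpb : ∃ C : ℝ, ∀ᵐ x ∂μ, p x ≤ C)
    (hqp : ∃ ε : ℝ, 0 < ε ∧ ∀ᵐ x ∂μ, ε ≤ q x - p x)
    (u : X → ℝ) (hu : Measurable u)
    (humem : modE μ q (fun x => (‖u x‖₊ : ℝ≥0∞)) < ⊤) :
    modE μ p (fun x => (‖u x‖₊ : ℝ≥0∞)) < ⊤ ∧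
    luxR μ p u ≤
      ENNReal.ofReal ((2 : ℝ) ^ (1 / essInf p μ)) *
        max ((luxR μ (fun x => (q x / p x) / (q x / p x - 1)) (fun _ => 1)) ^ (1 / essSup p μ))
            ((luxR μ (fun x => (q x / p x) / (q x / p x - 1)) (fun _ => 1)) ^ (1 / essInf p μ)) *
        luxR μ q u := by
  obtain ⟨ε, hε, hqp⟩ := hqp
  set r : X → ℝ := fun x => q x / p x / (q x / p x - 1)
  have hf : Measurable fun x => (‖u x‖₊ : ℝ≥0∞) := hu.nnnorm.coe_nnreal_ennreal
  have hp_inf : ∀ᵐ x ∂μ, essInf p μ ≤ p x := ae_essInf_le_of_pos hp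
  have hp_sup : ∀ᵐ x ∂μ, p x ≤ essSup p μ := ae_le_essSup hpb
  have hq_inf : ∀ᵐ x ∂μ, essInf p μ ≤ q x := by
    filter_upwards [hp_inf, hqp] with x h1 h2 using by linarith
  have hpqr : ∀ᵐ x ∂μ, 0 < p x ∧ (q x / p x).HolderConjugate (r x) := by
    filter_upwards [hp_inf, hqp] with x h1 h2
    have hpx := hp.trans_le h1
    exact ⟨hpx, .conjExponent ((one_lt_div hpx).2 (by linarith))⟩
  have hr_modE : modE μ r (fun _ => 1) = μ Set.univ := by simp [modE]
  refine ⟨?_, ?_⟩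
  · calc modE μ p _ = modE μ p _ * 1 := (mul_one _).symm
      _ ≤ modE μ q _ + modE μ r (fun _ => 1) := modE_mul_le_add hf hqm hpqr 1
      _ < ⊤ := by rw [hr_modE]; exact add_lt_top.2 ⟨humem, measure_lt_top μ _⟩
  have hr_ne_top : luxE μ r (fun _ => 1) ≠ ⊤ :=
    luxE_ne_top one_pos (hpqr.mono fun _ hx => hx.2.symm.lt.le)
      (by rw [hr_modE]; exact measure_ne_top μ _)
  have hq_ne_top : luxR μ q u ≠ ⊤ := luxE_ne_top hp hq_inf humem.ne
  rw [show luxR μ r (fun _ => 1) = luxE μ r (fun _ => 1) by simp [luxR]]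
  refine ENNReal.le_of_forall_lt_lt_top (φ := fun m => _ * max (m ^ _) (m ^ _) * _) hr_ne_top
    ?_ fun m hm hmt => luxE_le_ofReal_two_rpow_mul_max_rpow_mul_luxE hf hqm hpqr hp
      (hp_inf.and hp_sup) hm hmt
  exact ((ENNReal.continuous_mul_const hq_ne_top).comp <|
    (ENNReal.continuous_const_mul ofReal_ne_top).comp <|
      ENNReal.continuous_rpow_const.max ENNReal.continuous_rpow_const).continuousAt

/-- Embedding of variable exponent Lebesgue spaces on a finite measure space: if
`ess inf (q - p) > 0` then `L^{q(·)} ⊆ L^{p(·)}` with the quantitative norm bound in terms of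
`‖1‖_{L^{t'(·)}}` where `t = q/p` and `t'` is its conjugate exponent. -/
theorem Lq_subset_Lp_of_finite_measure {X : Type*} [MeasurableSpace X]
    (μ : Measure X) [IsFiniteMeasure μ]
    (p q : X → ℝ) (hpm : Measurable p) (hqm : Measurable q)
    (hp : 0 < essInf p μ) (hpb : ∃ C : ℝ, ∀ᵐ x ∂μ, p x ≤ C)
    (hq : 0 < essInf q μ) (hqb : ∃ C : ℝ, ∀ᵐ x ∂μ, q x ≤ C)
    (hqp : ∃ ε : ℝ, 0 < ε ∧ ∀ᵐ x ∂μ, ε ≤ q x - p x)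
    (u : X → ℝ) (hu : Measurable u)
    (humem : modE μ q (fun x => (‖u x‖₊ : ℝ≥0∞)) < ⊤) :
    modE μ p (fun x => (‖u x‖₊ : ℝ≥0∞)) < ⊤ ∧
    luxR μ p u ≤
      ENNReal.ofReal ((2 : ℝ) ^ (1 / essInf p μ)) *
        max ((luxR μ (fun x => (q x / p x) / (q x / p x - 1)) (fun _ => 1)) ^ (1 / essSup p μ))
            ((luxR μ (fun x => (q x / p x) / (q x / p x - 1)) (fun _ => 1)) ^ (1 / essInf p μ)) *
        luxR μ q u :=
  Lq_subset_Lp_of_finite_measure_general μ p q hqm hp hpb hqp u hu humem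

end
end

section
/- Let (X,μ) be a measure space, E(X,μ) a quasi-normed subspace of the space of μ-a.e. finite measurable functions, and q_0, q, q_1 bounded variable exponents with ess inf (q − q_0) > 0 and ess inf (q_1 − q) > 0. If the continuous embeddings E(X,μ) ↪ L^{q_0(·)}(X,μ) and E(X,μ) ↪ L^{q_1(·)}(X,μ) hold, then E(X,μ) ↪ L^{q(·)}(X,μ) holds. -/
open MeasureTheory Metric ENNReal

noncomputable section

/-- Membership in the variable exponent Lebesgue space (some scaling has finite modular). -/
def MemLpVar {X : Type*} [MeasurableSpace X] (μ : Measure X) (p : X → ℝ) (u : X → ℝ) : Prop :=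
  ∃ l : ℝ≥0∞, 0 < l ∧ l ≠ ⊤ ∧ modE μ p (fun x => (‖u x‖₊ : ℝ≥0∞) / l) < ⊤

/-! On `{f ≤ 1}` the `q(·)`-modular is dominated by the `q₀(·)`-modular and on `{f > 1}` by the
`q₁(·)`-modular, so `ρ_q ≤ ρ_{q₀} + ρ_{q₁}`. Dividing `f` by `c · max λ₀ λ₁`, where `λᵢ` are
admissible Luxemburg parameters for `qᵢ` and `c = 2^{1/a}` with `a` an a.e. lower bound of `q₀`
and `q₁`, makes both modulars at most `c^{-a} = 1/2`, hence
`‖f‖_{q(·)} ≤ c · max ‖f‖_{q₀(·)} ‖f‖_{q₁(·)}`. -/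

lemma exists_pos_ae_le_of_essInf_pos {X : Type*} [MeasurableSpace X] {μ : Measure X}
    {f : X → ℝ} (h : 0 < essInf f μ) : ∃ a : ℝ, 0 < a ∧ ∀ᵐ x ∂μ, a ≤ f x := by
  rw [essInf, Filter.liminf_eq] at h
  have hne : {a : ℝ | ∀ᶠ x in ae μ, a ≤ f x}.Nonempty := by
    -- otherwise `essInf f μ = sSup ∅ = 0`
    by_contra hempty
    simp [Set.not_nonempty_iff_eq_empty.mp hempty] at h
  obtain ⟨a, ha, hpos⟩ := exists_lt_of_lt_csSup hne h
  exact ⟨a, hpos, ha⟩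

section Modular

variable {X : Type*} [MeasurableSpace X] {μ : Measure X}

def luxAdmissible (μ : Measure X) (p : X → ℝ) (f : X → ℝ≥0∞) : Set ℝ≥0∞ :=
  {l | 0 < l ∧ l ≠ ⊤ ∧ modE μ p (fun x => f x / l) ≤ 1}

lemma modE_div_antitone {p : X → ℝ} (hp : ∀ᵐ x ∂μ, 0 ≤ p x) (f : X → ℝ≥0∞) :
    Antitone fun l : ℝ≥0∞ => modE μ p (fun x => f x / l) := fun _ _ hl =>
  lintegral_mono_ae <| hp.mono fun _ hx => ENNReal.rpow_le_rpow (ENNReal.div_le_div_left hl _) hx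

lemma mem_luxAdmissible_of_le {p : X → ℝ} (hp : ∀ᵐ x ∂μ, 0 ≤ p x) {f : X → ℝ≥0∞} {l L : ℝ≥0∞}
    (hl : l ∈ luxAdmissible μ p f) (hlL : l ≤ L) (hL : L ≠ ⊤) : L ∈ luxAdmissible μ p f :=
  ⟨hl.1.trans_le hlL, hL, (modE_div_antitone hp f hlL).trans hl.2.2⟩

lemma modE_div_mul_le {p : X → ℝ} {a : ℝ} (ha : 0 < a) (hp : ∀ᵐ x ∂μ, a ≤ p x)
    (f : X → ℝ≥0∞) (L : ℝ≥0∞) {c : ℝ≥0∞} (hc : 1 ≤ c) (hc_top : c ≠ ⊤) :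
    modE μ p (fun x => f x / (c * L)) ≤ c⁻¹ ^ a * modE μ p (fun x => f x / L) := by
  have hc_inv : c⁻¹ ≤ 1 := ENNReal.inv_le_one.mpr hc
  have hc0 : c ≠ 0 := (zero_lt_one.trans_le hc).ne'
  have hpointwise : ∀ᵐ x ∂μ, (f x / (c * L)) ^ p x ≤ c⁻¹ ^ a * (f x / L) ^ p x := by
    filter_upwards [hp] with x hx
    have hsplit : f x / (c * L) = c⁻¹ * (f x / L) := by
      rw [div_eq_mul_inv, div_eq_mul_inv, ENNReal.mul_inv (Or.inl hc0) (Or.inl hc_top)]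
      ring
    rw [hsplit, ENNReal.mul_rpow_of_nonneg _ _ (ha.le.trans hx)]
    exact mul_le_mul_left (ENNReal.rpow_le_rpow_of_exponent_ge hc_inv hx) _
  calc modE μ p (fun x => f x / (c * L))
      ≤ ∫⁻ x, c⁻¹ ^ a * (f x / L) ^ p x ∂μ := lintegral_mono_ae hpointwise
    _ = c⁻¹ ^ a * modE μ p (fun x => f x / L) :=
        lintegral_const_mul' _ _ (ENNReal.rpow_ne_top_of_nonneg ha.le (ENNReal.inv_ne_top.mpr hc0))

lemma MemLpVar.luxAdmissible_nonempty {p : X → ℝ} {a : ℝ} (ha : 0 < a)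
    (hp : ∀ᵐ x ∂μ, a ≤ p x) {u : X → ℝ} (hu : MemLpVar μ p u) :
    (luxAdmissible μ p (fun x => (‖u x‖₊ : ℝ≥0∞))).Nonempty := by
  obtain ⟨l, hl_pos, hl_top, hM⟩ := hu
  set M := modE μ p (fun x => (‖u x‖₊ : ℝ≥0∞) / l)
  set d : ℝ≥0∞ := 1 + M ^ a⁻¹
  have hd_top : d ≠ ⊤ := ENNReal.add_ne_top.mpr
    ⟨ENNReal.one_ne_top, ENNReal.rpow_ne_top_of_nonneg (inv_nonneg.mpr ha.le) hM.ne⟩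
  have hM_le : M ≤ d ^ a := by
    calc M = (M ^ a⁻¹) ^ a := (ENNReal.rpow_inv_rpow ha.ne' M).symm
      _ ≤ d ^ a := by gcongr; exact le_add_self
  refine ⟨d * l, ENNReal.mul_pos (one_pos.trans_le le_self_add).ne' hl_pos.ne',
    ENNReal.mul_ne_top hd_top hl_top, ?_⟩
  calc _ ≤ d⁻¹ ^ a * M := modE_div_mul_le ha hp _ l le_self_add hd_top
    _ = M / d ^ a := by rw [ENNReal.inv_rpow, ENNReal.div_eq_inv_mul]
    _ ≤ 1 := ENNReal.div_le_of_le_mul (by rwa [one_mul])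

lemma modE_le_add_of_ae_le {q0 q q1 : X → ℝ} (h0 : ∀ᵐ x ∂μ, q0 x ≤ q x)
    (h1 : ∀ᵐ x ∂μ, q x ≤ q1 x) {f : X → ℝ≥0∞} (hf : Measurable f) :
    modE μ q f ≤ modE μ q0 f + modE μ q1 f := by
  set A := f ⁻¹' Set.Iic 1
  have hA : MeasurableSet A := hf measurableSet_Iic
  rw [modE, ← lintegral_add_compl _ hA]
  gcongr
  · calc ∫⁻ x in A, f x ^ q x ∂μ ≤ ∫⁻ x in A, f x ^ q0 x ∂μ :=
          lintegral_mono_ae <| by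
            filter_upwards [ae_restrict_of_ae h0, ae_restrict_mem hA] with x hx hxA
            exact ENNReal.rpow_le_rpow_of_exponent_ge hxA hx
      _ ≤ modE μ q0 f := setLIntegral_le_lintegral _ _
  · calc ∫⁻ x in Aᶜ, f x ^ q x ∂μ ≤ ∫⁻ x in Aᶜ, f x ^ q1 x ∂μ :=
          lintegral_mono_ae <| by
            filter_upwards [ae_restrict_of_ae h1, ae_restrict_mem hA.compl] with x hx hxA
            exact ENNReal.rpow_le_rpow_of_exponent_le (le_of_not_ge hxA) hx
      _ ≤ modE μ q1 f := setLIntegral_le_lintegral _ _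

end Modular

section Interpolation

variable {X : Type*} [MeasurableSpace X] {μ : Measure X} {q0 q q1 : X → ℝ} {a : ℝ}
  (ha : 0 < a) (ha0 : ∀ᵐ x ∂μ, a ≤ q0 x) (ha1 : ∀ᵐ x ∂μ, a ≤ q1 x)
  (h0 : ∀ᵐ x ∂μ, q0 x ≤ q x) (h1 : ∀ᵐ x ∂μ, q x ≤ q1 x)
include ha ha0 ha1 h0 h1

lemma mul_max_mem_luxAdmissible {f : X → ℝ≥0∞} (hf : Measurable f) {l0 l1 : ℝ≥0∞}
    (hl0 : l0 ∈ luxAdmissible μ q0 f) (hl1 : l1 ∈ luxAdmissible μ q1 f) :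
    (2 : ℝ≥0∞) ^ a⁻¹ * max l0 l1 ∈ luxAdmissible μ q f := by
  set c : ℝ≥0∞ := 2 ^ a⁻¹
  have hc : 1 ≤ c := ENNReal.one_le_rpow one_le_two (inv_pos.mpr ha)
  have hc_top : c ≠ ⊤ := ENNReal.rpow_ne_top_of_nonneg (inv_nonneg.mpr ha.le) ENNReal.ofNat_ne_top
  have hc_pow : c⁻¹ ^ a = 2⁻¹ := by
    rw [ENNReal.inv_rpow, ENNReal.rpow_inv_rpow ha.ne']
  set L := max l0 l1
  have hL_top : L ≠ ⊤ := max_ne_top hl0.2.1 hl1.2.1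
  have half_of_mem {p : X → ℝ} (hp : ∀ᵐ x ∂μ, a ≤ p x) (hL : L ∈ luxAdmissible μ p f) :
      modE μ p (fun x => f x / (c * L)) ≤ 2⁻¹ :=
    calc _ ≤ c⁻¹ ^ a * modE μ p (fun x => f x / L) := modE_div_mul_le ha hp f L hc hc_top
      _ ≤ 2⁻¹ := by rw [hc_pow]; exact mul_le_of_le_one_right' hL.2.2
  have hnonneg {p : X → ℝ} (hp : ∀ᵐ x ∂μ, a ≤ p x) : ∀ᵐ x ∂μ, 0 ≤ p x :=
    hp.mono fun _ hx => ha.le.trans hx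
  refine ⟨ENNReal.mul_pos (one_pos.trans_le hc).ne' (hl0.1.trans_le (le_max_left _ _)).ne',
    ENNReal.mul_ne_top hc_top hL_top, ?_⟩
  calc modE μ q (fun x => f x / (c * L))
      ≤ modE μ q0 (fun x => f x / (c * L)) + modE μ q1 (fun x => f x / (c * L)) :=
        modE_le_add_of_ae_le h0 h1 (hf.div_const _)
    _ ≤ 2⁻¹ + 2⁻¹ := by
        gcongr
        · exact half_of_mem ha0
            (mem_luxAdmissible_of_le (hnonneg ha0) hl0 (le_max_left _ _) hL_top)
        · exact half_of_mem ha1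
            (mem_luxAdmissible_of_le (hnonneg ha1) hl1 (le_max_right _ _) hL_top)
    _ = 1 := ENNReal.inv_two_add_inv_two

lemma MemLpVar.interpolate {u : X → ℝ} (hu : Measurable u) (hu0 : MemLpVar μ q0 u)
    (hu1 : MemLpVar μ q1 u) : MemLpVar μ q u := by
  obtain ⟨l0, hl0⟩ := hu0.luxAdmissible_nonempty ha ha0
  obtain ⟨l1, hl1⟩ := hu1.luxAdmissible_nonempty ha ha1
  obtain ⟨hl_pos, hl_top, hmod⟩ :=
    mul_max_mem_luxAdmissible ha ha0 ha1 h0 h1 hu.nnnorm.coe_nnreal_ennreal hl0 hl1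
  exact ⟨_, hl_pos, hl_top, hmod.trans_lt ENNReal.one_lt_top⟩

lemma luxE_le_mul_max {f : X → ℝ≥0∞} (hf : Measurable f) :
    luxE μ q f ≤ (2 : ℝ≥0∞) ^ a⁻¹ * max (luxE μ q0 f) (luxE μ q1 f) := by
  set c : ℝ≥0∞ := 2 ^ a⁻¹
  have hc0 : c ≠ 0 := (ENNReal.rpow_pos two_pos ENNReal.ofNat_ne_top).ne'
  have hc_top : c ≠ ⊤ := ENNReal.rpow_ne_top_of_nonneg (inv_nonneg.mpr ha.le) ENNReal.ofNat_ne_top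
  refine le_of_forall_gt_imp_ge_of_dense fun b hb => ?_
  have hmax : max (luxE μ q0 f) (luxE μ q1 f) < b / c :=
    (ENNReal.lt_div_iff_mul_lt (Or.inl hc0) (Or.inl hc_top)).mpr (by rwa [mul_comm])
  obtain ⟨l0, hl0, hl0b⟩ := sInf_lt_iff.mp (max_lt_iff.mp hmax).1
  obtain ⟨l1, hl1, hl1b⟩ := sInf_lt_iff.mp (max_lt_iff.mp hmax).2
  calc luxE μ q f ≤ c * max l0 l1 :=
        sInf_le (mul_max_mem_luxAdmissible ha ha0 ha1 h0 h1 hf hl0 hl1)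
    _ ≤ c * (b / c) := by gcongr; exact max_le hl0b.le hl1b.le
    _ ≤ b := ENNReal.mul_div_le

end Interpolation

theorem embedding_interpolation_general {X : Type*} [MeasurableSpace X] (μ : Measure X)
    (q0 q q1 : X → ℝ)
    (hq0 : 0 < essInf q0 μ)
    (hq1 : 0 < essInf q1 μ)
    (h0 : ∃ ε : ℝ, 0 < ε ∧ ∀ᵐ x ∂μ, ε ≤ q x - q0 x)
    (h1 : ∃ ε : ℝ, 0 < ε ∧ ∀ᵐ x ∂μ, ε ≤ q1 x - q x)
    (S : Set (X → ℝ)) (hSmeas : ∀ u ∈ S, Measurable u)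
    (N : (X → ℝ) → ℝ≥0∞)
    (hE0 : (∀ u ∈ S, MemLpVar μ q0 u) ∧
      ∃ C0 : ℝ≥0∞, C0 ≠ ⊤ ∧ ∀ u ∈ S, luxR μ q0 u ≤ C0 * N u)
    (hE1 : (∀ u ∈ S, MemLpVar μ q1 u) ∧
      ∃ C1 : ℝ≥0∞, C1 ≠ ⊤ ∧ ∀ u ∈ S, luxR μ q1 u ≤ C1 * N u) :
    (∀ u ∈ S, MemLpVar μ q u) ∧
      ∃ C : ℝ≥0∞, C ≠ ⊤ ∧ ∀ u ∈ S, luxR μ q u ≤ C * N u := by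
  obtain ⟨hS0, C0, hC0_top, hC0⟩ := hE0
  obtain ⟨hS1, C1, hC1_top, hC1⟩ := hE1
  obtain ⟨a0, ha0_pos, ha0⟩ := exists_pos_ae_le_of_essInf_pos hq0
  obtain ⟨a1, ha1_pos, ha1⟩ := exists_pos_ae_le_of_essInf_pos hq1
  have ha0' : ∀ᵐ x ∂μ, min a0 a1 ≤ q0 x := ha0.mono fun _ hx => (min_le_left _ _).trans hx
  have ha1' : ∀ᵐ x ∂μ, min a0 a1 ≤ q1 x := ha1.mono fun _ hx => (min_le_right _ _).trans hx
  have ha := lt_min ha0_pos ha1_pos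
  obtain ⟨_, _, hq0q⟩ := h0
  obtain ⟨_, _, hqq1⟩ := h1
  have h0' : ∀ᵐ x ∂μ, q0 x ≤ q x := hq0q.mono fun _ hx => by linarith
  have h1' : ∀ᵐ x ∂μ, q x ≤ q1 x := hqq1.mono fun _ hx => by linarith
  refine ⟨fun u hu => (hS0 u hu).interpolate ha ha0' ha1' h0' h1' (hSmeas u hu) (hS1 u hu),
    2 ^ (min a0 a1)⁻¹ * (C0 + C1), ENNReal.mul_ne_top (ENNReal.rpow_ne_top_of_nonneg
      (inv_nonneg.mpr ha.le) ENNReal.ofNat_ne_top) (ENNReal.add_ne_top.mpr ⟨hC0_top, hC1_top⟩),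
    fun u hu => ?_⟩
  calc luxR μ q u ≤ 2 ^ (min a0 a1)⁻¹ * max (luxR μ q0 u) (luxR μ q1 u) :=
        luxE_le_mul_max ha ha0' ha1' h0' h1' (hSmeas u hu).nnnorm.coe_nnreal_ennreal
    _ ≤ 2 ^ (min a0 a1)⁻¹ * (C0 * N u + C1 * N u) := by
        gcongr
        exact max_le ((hC0 u hu).trans le_self_add) ((hC1 u hu).trans le_add_self)
    _ = 2 ^ (min a0 a1)⁻¹ * (C0 + C1) * N u := by ring

/-- Interpolation of embeddings: if a quasi-normed space `S` of measurable functions embeds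
continuously into `L^{q₀(·)}` and into `L^{q₁(·)}`, and `q₀ ≪ q ≪ q₁`, then it embeds
continuously into `L^{q(·)}`. -/
theorem embedding_interpolation {X : Type*} [MeasurableSpace X] (μ : Measure X)
    (q0 q q1 : X → ℝ)
    (hq0 : 0 < essInf q0 μ) (hq0b : ∃ C : ℝ, ∀ᵐ x ∂μ, q0 x ≤ C)
    (hq : 0 < essInf q μ) (hqb : ∃ C : ℝ, ∀ᵐ x ∂μ, q x ≤ C)
    (hq1 : 0 < essInf q1 μ) (hq1b : ∃ C : ℝ, ∀ᵐ x ∂μ, q1 x ≤ C)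
    (h0 : ∃ ε : ℝ, 0 < ε ∧ ∀ᵐ x ∂μ, ε ≤ q x - q0 x)
    (h1 : ∃ ε : ℝ, 0 < ε ∧ ∀ᵐ x ∂μ, ε ≤ q1 x - q x)
    (S : Set (X → ℝ)) (hSmeas : ∀ u ∈ S, Measurable u)
    (hSsmul : ∀ u ∈ S, ∀ c : ℝ, (fun x => c * u x) ∈ S)
    (N : (X → ℝ) → ℝ≥0∞)
    (hNhom : ∀ (u : X → ℝ) (c : ℝ), N (fun x => c * u x) = ENNReal.ofReal |c| * N u)
    (hE0 : (∀ u ∈ S, MemLpVar μ q0 u) ∧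
      ∃ C0 : ℝ≥0∞, C0 ≠ ⊤ ∧ ∀ u ∈ S, luxR μ q0 u ≤ C0 * N u)
    (hE1 : (∀ u ∈ S, MemLpVar μ q1 u) ∧
      ∃ C1 : ℝ≥0∞, C1 ≠ ⊤ ∧ ∀ u ∈ S, luxR μ q1 u ≤ C1 * N u) :
    (∀ u ∈ S, MemLpVar μ q u) ∧
      ∃ C : ℝ≥0∞, C ≠ ⊤ ∧ ∀ u ∈ S, luxR μ q u ≤ C * N u :=
  embedding_interpolation_general μ q0 q q1 hq0 hq1 h0 h1 S hSmeas N hE0 hE1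

end
end

section
/- Let (X,μ) be a measure space, E ⊆ X measurable with 0 < μ(E) < ∞, and u : E → [-∞,∞] measurable and finite a.e. Then for every bounded variable exponent p on X and every c ∈ ℝ: |m_u(E) − c| ≤ max{2, (2/μ(E))^{1/p_E^-}} · ‖u − c‖_{L^{p(·)}(E)}, where m_u(E) is the median of u on E. -/
open MeasureTheory Metric ENNReal

noncomputable section

/-!
At the median `m`, each of `{u ≥ m}` and `{u ≤ m}` carries at least half of the mass of `E`: the
distribution function `t ↦ μ{u < t}` is left continuous and crosses `μ(E)/2` at `m`. Hence
`|u - c| ≥ |m - c|` on a set `A ⊆ E` with `μ(A) ≥ μ(E)/2`. If `l` is admissible for the Luxemburg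
norm and `|m - c| > l`, then `μ(A) (|m - c|/l)^{p_E^-} ≤ ∫_E (|u - c|/l)^{p} ≤ 1`, which bounds
`|m - c|/l` by `(2/μ(E))^{1/p_E^-}`.
-/

open Set Filter Topology

namespace MeasureTheory.Measure

/-- The median `m_u(E)` of the paper is the median of the law of `u` under `μ.restrict E`. -/
def median (ρ : Measure ℝ) : ℝ :=
  sSup {t | ρ (Iio t) ≤ ρ univ / 2}

variable (ρ : Measure ℝ) [IsFiniteMeasure ρ] [NeZero ρ]

theorem nonempty_setOf_measure_Iio_le_half : {t | ρ (Iio t) ≤ ρ univ / 2}.Nonempty := by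
  have h : Tendsto (ρ ∘ Iio) atBot (𝓝 0) := by
    have := tendsto_measure_iInter_atBot (μ := ρ) (fun t => measurableSet_Iio.nullMeasurableSet)
      monotone_Iio ⟨0, measure_ne_top ρ _⟩
    have hempty : ⋂ t : ℝ, Iio t = ∅ :=
      eq_empty_of_forall_notMem fun x hx => lt_irrefl x (mem_iInter.1 hx x)
    rwa [hempty, measure_empty] at this
  obtain ⟨t, ht⟩ := (h.eventually (gt_mem_nhds (ENNReal.half_pos (NeZero.ne (ρ univ))))).exists
  exact ⟨t, ht.le⟩

theorem bddAbove_setOf_measure_Iio_le_half : BddAbove {t | ρ (Iio t) ≤ ρ univ / 2} := by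
  have h : Tendsto (ρ ∘ Iio) atTop (𝓝 (ρ univ)) := by
    simpa only [iUnion_Iio] using tendsto_measure_iUnion_atTop (μ := ρ) monotone_Iio
  have hhalf : ρ univ / 2 < ρ univ := ENNReal.half_lt_self (NeZero.ne (ρ univ)) (measure_ne_top ρ _)
  obtain ⟨t₀, ht₀⟩ := (h.eventually (lt_mem_nhds hhalf)).exists
  refine ⟨t₀, fun t (ht : ρ (Iio t) ≤ _) => le_of_not_gt fun hlt => ?_⟩
  exact (ht₀.trans_le (measure_mono (Iio_subset_Iio hlt.le))).not_ge ht

theorem measure_Iio_median_le : ρ (Iio ρ.median) ≤ ρ univ / 2 := by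
  obtain ⟨s, hs_mono, hs_lt, hs_lim⟩ := exists_seq_strictMono_tendsto ρ.median
  have hunion : ⋃ n, Iio (s n) = Iio ρ.median :=
    (isLUB_of_tendsto_atTop hs_mono.monotone hs_lim).iUnion_Iio_eq
  have h := tendsto_measure_iUnion_atTop (μ := ρ) (s := fun n => Iio (s n))
    (monotone_Iio.comp hs_mono.monotone)
  rw [hunion] at h
  refine le_of_tendsto' h fun n => ?_
  obtain ⟨t, ht, hst⟩ := exists_lt_of_lt_csSup (nonempty_setOf_measure_Iio_le_half ρ) (hs_lt n)
  exact (measure_mono (Iio_subset_Iio hst.le)).trans ht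

theorem half_le_measure_Iic_median : ρ univ / 2 ≤ ρ (Iic ρ.median) := by
  have h : Tendsto (ρ ∘ Iio) (𝓝[>] ρ.median) (𝓝 (ρ (⋂ t > ρ.median, Iio t))) :=
    tendsto_measure_biInter_gt (fun _ _ => measurableSet_Iio.nullMeasurableSet)
      (fun _ _ _ hij => Iio_subset_Iio hij) ⟨ρ.median + 1, by simp, measure_ne_top ρ _⟩
  have hinter : ⋂ t > ρ.median, Iio t = Iic ρ.median := by
    ext x
    simp only [mem_iInter, mem_Iio, mem_Iic]
    exact ⟨le_of_forall_gt, fun hx t ht => hx.trans_lt ht⟩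
  rw [hinter] at h
  refine ge_of_tendsto h (eventually_nhdsWithin_of_forall fun t (ht : ρ.median < t) => ?_)
  exact (lt_of_not_ge fun hle => ht.not_ge
    (le_csSup (bddAbove_setOf_measure_Iio_le_half ρ) hle)).le

theorem half_le_measure_Ici_median : ρ univ / 2 ≤ ρ (Ici ρ.median) :=
  calc ρ univ / 2 = ρ univ - ρ univ / 2 := (ENNReal.sub_half (measure_ne_top ρ _)).symm
    _ ≤ ρ univ - ρ (Iio ρ.median) := tsub_le_tsub_left (measure_Iio_median_le ρ) _
    _ = ρ (Ici ρ.median) := by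
      rw [← compl_Iio, measure_compl measurableSet_Iio (measure_ne_top ρ _)]

theorem half_le_measure_abs_median_sub_le (c : ℝ) :
    ρ univ / 2 ≤ ρ {y | |ρ.median - c| ≤ |y - c|} := by
  rcases le_total c ρ.median with hc | hc
  · refine (half_le_measure_Ici_median ρ).trans (measure_mono fun y (hy : ρ.median ≤ y) => ?_)
    show |ρ.median - c| ≤ |y - c|
    rw [abs_of_nonneg (sub_nonneg.2 hc), abs_of_nonneg (by linarith)]
    linarith
  · refine (half_le_measure_Iic_median ρ).trans (measure_mono fun y (hy : y ≤ ρ.median) => ?_)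
    show |ρ.median - c| ≤ |y - c|
    rw [abs_of_nonpos (sub_nonpos.2 hc), abs_of_nonpos (by linarith)]
    linarith

end MeasureTheory.Measure

theorem measure_setOf_lt_coe_eq_map_toReal {X : Type*} [MeasurableSpace X] {ν : Measure X}
    {u : X → EReal} (hu : Measurable u) (hfin : ∀ᵐ x ∂ν, u x ≠ ⊤ ∧ u x ≠ ⊥) (t : ℝ) :
    ν {x | u x < t} = ν.map (fun x => (u x).toReal) (Iio t) := by
  rw [Measure.map_apply hu.ereal_toReal measurableSet_Iio]
  refine measure_congr (hfin.mono fun x ⟨htop, hbot⟩ => ?_)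
  change (u x < t) = ((u x).toReal < t)
  rw [← EReal.coe_toReal htop hbot, EReal.coe_lt_coe_iff, EReal.toReal_coe]

theorem sSup_setOf_measure_lt_le_half_eq_median {X : Type*} [MeasurableSpace X] {μ : Measure X}
    {E : Set X} (hE : MeasurableSet E) {u : X → EReal} (hu : Measurable u)
    (hfin : ∀ᵐ x ∂μ.restrict E, u x ≠ ⊤ ∧ u x ≠ ⊥) :
    sSup {t : ℝ | μ {x ∈ E | u x < (t : EReal)} ≤ μ E / 2} =
      ((μ.restrict E).map fun x => (u x).toReal).median := by
  rw [Measure.median, Measure.map_apply hu.ereal_toReal MeasurableSet.univ, preimage_univ,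
    Measure.restrict_apply_univ]
  congr! 4 with t
  rw [← measure_setOf_lt_coe_eq_map_toReal hu hfin, Measure.restrict_apply' hE, inter_comm]
  rfl

/-- `essInf` of a real function that is not essentially bounded below is the junk value `0`. -/
theorem Real.isBoundedUnder_ge_of_essInf_pos {X : Type*} [MeasurableSpace X] {μ : Measure X}
    {p : X → ℝ} (hp : 0 < essInf p μ) : IsBoundedUnder (· ≥ ·) (ae μ) p := by
  by_contra h
  rw [essInf, Real.liminf_of_not_isBoundedUnder h] at hp
  exact hp.false

theorem essInf_pos_of_absolutelyContinuous {X : Type*} [MeasurableSpace X] {μ ν : Measure X}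
    [NeZero ν] {p : X → ℝ} (hνμ : ν ≪ μ) (hp : 0 < essInf p μ)
    (hpb : ∃ C : ℝ, ∀ᵐ x ∂μ, p x ≤ C) : 0 < essInf p ν := by
  obtain ⟨C, hC⟩ := hpb
  exact hp.trans_le <| essInf_antitone_measure hνμ (Real.isBoundedUnder_ge_of_essInf_pos hp)
    (isBoundedUnder_of_eventually_le (hνμ.ae_le hC)).isCoboundedUnder_ge

section Luxemburg

variable {X : Type*} [MeasurableSpace X] {ν : Measure X} {p : X → ℝ} {f : X → ℝ≥0∞}
  {A : Set X} {a : ℝ} {b : ℝ≥0∞}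

theorem measure_mul_rpow_le_modE (hA : MeasurableSet A) (ha : 0 ≤ a) (hb : 1 ≤ b)
    (hpa : ∀ᵐ x ∂ν, a ≤ p x) (hbf : ∀ x ∈ A, b ≤ f x) : ν A * b ^ a ≤ modE ν p f :=
  calc ν A * b ^ a = ∫⁻ _ in A, b ^ a ∂ν := by rw [setLIntegral_const, mul_comm]
    _ ≤ ∫⁻ x in A, f x ^ p x ∂ν := by
      refine lintegral_mono_ae ?_
      filter_upwards [ae_restrict_of_ae hpa, ae_restrict_mem hA] with x hax hxA
      calc b ^ a ≤ b ^ p x := ENNReal.rpow_le_rpow_of_exponent_le hb hax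
        _ ≤ f x ^ p x := ENNReal.rpow_le_rpow (hbf x hxA) (ha.trans hax)
    _ ≤ modE ν p f := setLIntegral_le_lintegral _ _

theorem le_mul_luxE_of_le_on (hA : MeasurableSet A) (ha : 0 < a) (hpa : ∀ᵐ x ∂ν, a ≤ p x)
    (hbf : ∀ x ∈ A, b ≤ f x) {K : ℝ≥0∞} (hK : 1 ≤ K) (hK_top : K ≠ ⊤)
    (hKA : (ν A)⁻¹ ≤ K ^ a) : b ≤ K * luxE ν p f := by
  rw [mul_comm, ← ENNReal.div_le_iff (one_pos.trans_le hK).ne' hK_top]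
  refine le_sInf fun l ⟨hl0, hl_top, hmod⟩ => ENNReal.div_le_of_le_mul' ?_
  rcases le_or_gt b l with hbl | hlb
  · exact hbl.trans (le_mul_of_one_le_left' hK)
  have hβ : 1 ≤ b / l :=
    (ENNReal.le_div_iff_mul_le (.inl hl0.ne') (.inl hl_top)).2 (by simpa using hlb.le)
  have hcheb := measure_mul_rpow_le_modE hA ha.le hβ hpa
    fun x hx => ENNReal.div_le_div_right (hbf x hx) l
  have hβK : (b / l) ^ a ≤ K ^ a :=
    (ENNReal.le_inv_iff_mul_le.2 (by rw [mul_comm]; exact hcheb.trans hmod)).trans hKA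
  calc b = b / l * l := (ENNReal.div_mul_cancel hl0.ne' hl_top).symm
    _ ≤ K * l := by gcongr; exact (ENNReal.rpow_le_rpow_iff ha).1 hβK

end Luxemburg

theorem ENNReal.inv_half_le_max_two_rpow {M : ℝ≥0∞} (hM0 : M ≠ 0) (hM : M ≠ ⊤) {a : ℝ}
    (ha : 0 < a) : (M / 2)⁻¹ ≤ max 2 (ENNReal.ofReal ((2 / M.toReal) ^ (1 / a))) ^ a :=
  calc (M / 2)⁻¹ = ENNReal.ofReal (2 / M.toReal) := by
        rw [ENNReal.inv_div (.inl ofNat_ne_top) (.inl two_ne_zero),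
          ofReal_div_of_pos (toReal_pos hM0 hM), ofReal_toReal hM, ofReal_ofNat]
    _ = ENNReal.ofReal ((2 / M.toReal) ^ (1 / a)) ^ a := by
        rw [ofReal_rpow_of_nonneg (by positivity) ha.le, ← Real.rpow_mul (by positivity),
          one_div_mul_cancel ha.ne', Real.rpow_one]
    _ ≤ _ := by gcongr; exact le_max_right _ _

/-- Median estimate: for a measurable `u : E → [-∞,∞]` finite a.e. on a set of positive finite
measure, `|m_u(E) - c| ≤ max{2, (2/μ(E))^{1/p_E^-}} ‖u - c‖_{L^{p(·)}(E)}` for every bounded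
variable exponent `p` and every `c ∈ ℝ`, where `m_u(E)` is the median of `u` on `E`. -/
theorem median_le_luxNorm {X : Type*} [MeasurableSpace X] (μ : Measure X)
    (E : Set X) (hE : MeasurableSet E) (hE0 : 0 < μ E) (hE1 : μ E < ⊤)
    (u : X → EReal) (hu : Measurable u)
    (hfin : ∀ᵐ x ∂μ.restrict E, u x ≠ ⊤ ∧ u x ≠ ⊥)
    (p : X → ℝ) (hp : 0 < essInf p μ) (hpb : ∃ C : ℝ, ∀ᵐ x ∂μ, p x ≤ C)
    (c : ℝ) :
    ENNReal.ofReal |sSup {t : ℝ | μ {x ∈ E | u x < (t : EReal)} ≤ μ E / 2} - c| ≤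
      max 2 (ENNReal.ofReal ((2 / (μ E).toReal) ^ (1 / essInf p (μ.restrict E)))) *
        luxR (μ.restrict E) p (fun x => (u x).toReal - c) := by
  set ν := μ.restrict E
  set v := fun x => (u x).toReal
  set ρ := ν.map v
  have hv : Measurable v := hu.ereal_toReal
  have : IsFiniteMeasure ν := isFiniteMeasure_restrict.2 hE1.ne
  have : NeZero ν := ⟨mt Measure.restrict_eq_zero.1 hE0.ne'⟩
  have : NeZero ρ := ⟨(Measure.map_ne_zero_iff hv.aemeasurable).2 (NeZero.ne ν)⟩
  have ha : 0 < essInf p ν :=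
    essInf_pos_of_absolutelyContinuous Measure.absolutelyContinuous_restrict hp hpb
  have hpa : ∀ᵐ x ∂ν, essInf p ν ≤ p x :=
    ae_essInf_le ((Real.isBoundedUnder_ge_of_essInf_pos hp).mono (ae_mono Measure.restrict_le_self))
  set A := {x | |ρ.median - c| ≤ |v x - c|}
  have hA : MeasurableSet A := measurableSet_le measurable_const (by fun_prop)
  have hνA : μ E / 2 ≤ ν A := by
    have := Measure.half_le_measure_abs_median_sub_le ρ c
    rwa [Measure.map_apply hv (measurableSet_le measurable_const (by fun_prop)),
      Measure.map_apply hv .univ, preimage_univ, Measure.restrict_apply_univ] at this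
  rw [sSup_setOf_measure_lt_le_half_eq_median hE hu hfin]
  refine le_mul_luxE_of_le_on hA ha hpa (fun x (hx : x ∈ A) => ?_)
    (one_le_two.trans (le_max_left _ _)) (max_lt ofNat_lt_top ofReal_lt_top).ne
    ((ENNReal.inv_le_inv.2 hνA).trans (ENNReal.inv_half_le_max_two_rpow hE0.ne' hE1.ne ha))
  exact (ENNReal.ofReal_le_ofReal hx).trans_eq (Real.enorm_eq_ofReal_abs _).symm

end
end

section
/- Let (X,μ) be a measure space, p a bounded variable exponent, and q_1 ≤ q_2 variable exponents (pointwise). Then for every sequence g = {g_k}_{k∈ℤ} ⊆ L^{p(·)}(X,μ): ‖g‖_{ℓ^{q_2(·)}(L^{p(·)})} ≤ ‖g‖_{ℓ^{q_1(·)}(L^{p(·)})} and ‖g‖_{L^{p(·)}(ℓ^{q_2(·)})} ≤ ‖g‖_{L^{p(·)}(ℓ^{q_1(·)})}; in particular ℓ^{q_1(·)}(L^{p(·)}) ↪ ℓ^{q_2(·)}(L^{p(·)}) and L^{p(·)}(ℓ^{q_1(·)}) ↪ L^{p(·)}(ℓ^{q_2(·)}). -/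
open MeasureTheory Metric ENNReal

noncomputable section

/-! The embedding `ℓ^{q₁} ↪ ℓ^{q₂}` has norm one pointwise, which settles `L^{p(·)}(ℓ^{q(·)})`.
For `ℓ^{q(·)}(L^{p(·)})`, each summand `inf {λ | ∫ (h / λ^{1/q})^p ≤ 1}` of the modular can only
decrease when `q` grows, provided the admissible `λ` are at most `1`. A modular bounded by `1`
has all summands at most `1`, and replacing `g / l` by `g / l'` with `l' > l` shrinks every term
by the factor `l / l' < 1`, which covers the admissible `λ` slightly above `1`; this uses that
`1/q₁` is essentially bounded. -/

namespace ENNReal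

lemma le_rpow_tsum_rpow {ι : Type*} {r : ℝ} (hr : 0 < r) (v : ι → ℝ≥0∞) (i : ι) :
    v i ≤ (∑' j, v j ^ r) ^ (1 / r) := by
  calc v i = (v i ^ r) ^ (1 / r) := by rw [← rpow_mul, mul_one_div_cancel hr.ne', rpow_one]
    _ ≤ (∑' j, v j ^ r) ^ (1 / r) := by gcongr; exact ENNReal.le_tsum i

lemma rpow_tsum_rpow_le {ι : Type*} {r s : ℝ} (hr : 0 < r) (hrs : r ≤ s) (v : ι → ℝ≥0∞) :
    (∑' i, v i ^ s) ^ (1 / s) ≤ (∑' i, v i ^ r) ^ (1 / r) := by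
  set T := (∑' i, v i ^ r) ^ (1 / r)
  have hs : 0 < s := hr.trans_le hrs
  have hsum : ∑' i, v i ^ r = T ^ r := by rw [← rpow_mul, one_div_mul_cancel hr.ne', rpow_one]
  have hpow : ∑' i, v i ^ s ≤ T ^ s :=
    calc ∑' i, v i ^ s = ∑' i, v i ^ (s - r) * v i ^ r := by
          simp_rw [← rpow_add_of_nonneg _ _ (sub_nonneg.2 hrs) hr.le, sub_add_cancel]
      _ ≤ ∑' i, T ^ (s - r) * v i ^ r := by
          gcongr with i
          exact le_rpow_tsum_rpow hr v i
      _ = T ^ s := by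
          rw [ENNReal.tsum_mul_left, hsum, ← rpow_add_of_nonneg _ _ (sub_nonneg.2 hrs) hr.le,
            sub_add_cancel]
  calc (∑' i, v i ^ s) ^ (1 / s) ≤ (T ^ s) ^ (1 / s) := by gcongr
    _ = T := by rw [← rpow_mul, mul_one_div_cancel hs.ne', rpow_one]

lemma mul_rpow_le_rpow {c l : ℝ≥0∞} {a b A : ℝ} (hc : c ≤ 1) (hcl : c * l ^ A ≤ 1)
    (hb : 0 ≤ b) (hba : b ≤ a) (haA : a ≤ A) : c * l ^ a ≤ l ^ b := by
  rcases le_total l 1 with hl | hl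
  · calc c * l ^ a ≤ 1 * l ^ a := by gcongr
      _ ≤ l ^ b := by rw [one_mul]; exact rpow_le_rpow_of_exponent_ge hl hba
  · calc c * l ^ a ≤ c * l ^ A := by gcongr
      _ ≤ l ^ (0 : ℝ) := by rwa [rpow_zero]
      _ ≤ l ^ b := rpow_le_rpow_of_exponent_le hl hb

lemma mul_div_le_div_of_mul_le {a b c d : ℝ≥0∞} (ha₀ : a ≠ 0) (ha : a ≠ ⊤) (h : c * a ≤ b) :
    c * d / b ≤ d / a := by
  refine ENNReal.div_le_of_le_mul ?_
  calc c * d = d / a * (c * a) := by rw [mul_left_comm, ENNReal.div_mul_cancel ha₀ ha]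
    _ ≤ d / a * b := by gcongr

end ENNReal

lemma seqNormE_anti {r s : ℝ≥0∞} (hr₀ : r ≠ 0) (hrs : r ≤ s) (v : ℤ → ℝ≥0∞) :
    seqNormE s v ≤ seqNormE r v := by
  by_cases hr : r = ⊤
  · subst hr
    rw [top_le_iff.1 hrs]
  have hr_pos : 0 < r.toReal := ENNReal.toReal_pos hr₀ hr
  unfold seqNormE
  rw [if_neg hr]
  split_ifs with hs
  · exact iSup_le (ENNReal.le_rpow_tsum_rpow hr_pos v)
  · exact ENNReal.rpow_tsum_rpow_le hr_pos (ENNReal.toReal_mono hs hrs) v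

section MixedNorms

variable {X : Type*} [MeasurableSpace X] {μ : Measure X} {p : X → ℝ}

lemma modE_mono_ae (hp : ∀ᵐ x ∂μ, 0 ≤ p x) {f g : X → ℝ≥0∞} (hfg : ∀ᵐ x ∂μ, f x ≤ g x) :
    modE μ p f ≤ modE μ p g := by
  refine lintegral_mono_ae ?_
  filter_upwards [hp, hfg] with x hpx hfgx
  exact ENNReal.rpow_le_rpow hfgx hpx

lemma luxE_mono_ae (hp : ∀ᵐ x ∂μ, 0 ≤ p x) {f g : X → ℝ≥0∞} (hfg : ∀ᵐ x ∂μ, f x ≤ g x) :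
    luxE μ p f ≤ luxE μ p g := by
  refine sInf_le_sInf fun l ⟨hl₀, hl, hmod⟩ => ⟨hl₀, hl, le_trans (modE_mono_ae hp ?_) hmod⟩
  filter_upwards [hfg] with x hx
  exact ENNReal.div_le_div_right hx _

lemma lpEllNorm_anti (hp : ∀ᵐ x ∂μ, 0 ≤ p x) {q₁ q₂ : X → ℝ≥0∞} (hq₁ : ∀ᵐ x ∂μ, q₁ x ≠ 0)
    (hq : ∀ᵐ x ∂μ, q₁ x ≤ q₂ x) (g : ℤ → X → ℝ≥0∞) :
    LpEllNorm μ p q₂ g ≤ LpEllNorm μ p q₁ g := by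
  refine luxE_mono_ae hp ?_
  filter_upwards [hq₁, hq] with x hx₀ hx
  exact seqNormE_anti hx₀ hx _

def ellLpModTerm (μ : Measure X) (p : X → ℝ) (q : X → ℝ≥0∞) (h : X → ℝ≥0∞) : ℝ≥0∞ :=
  sInf {l : ℝ≥0∞ | 0 < l ∧ l ≠ ⊤ ∧ modE μ p (fun x => h x / l ^ (1 / q x).toReal) ≤ 1}

lemma ellLpMod_eq_tsum (q : X → ℝ≥0∞) (g : ℤ → X → ℝ≥0∞) :
    ellLpMod μ p q g = ∑' k, ellLpModTerm μ p q (g k) := rfl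

lemma modE_le_one_of_ellLpModTerm_lt (hp : ∀ᵐ x ∂μ, 0 ≤ p x) {q h : X → ℝ≥0∞} {l : ℝ≥0∞}
    (hl : ellLpModTerm μ p q h < l) :
    modE μ p (fun x => h x / l ^ (1 / q x).toReal) ≤ 1 := by
  obtain ⟨l₀, ⟨hl₀, -, hmod⟩, hl₀l⟩ := sInf_lt_iff.1 hl
  refine le_trans (modE_mono_ae hp (Filter.Eventually.of_forall fun x => ?_)) hmod
  exact ENNReal.div_le_div_left (ENNReal.rpow_le_rpow hl₀l.le ENNReal.toReal_nonneg) _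

/-- For `l ≤ 1` the comparison `l ^ (1/q₁) ≤ l ^ (1/q₂)` suffices; for `l` slightly above `1`
the factor `c < 1` absorbs `l ^ (1/q₁) ≤ l ^ A`. -/
lemma ellLpModTerm_mul_le (hp : ∀ᵐ x ∂μ, 0 ≤ p x) {A : ℝ} (hA : 0 < A) {q₁ q₂ : X → ℝ≥0∞}
    (hq₁ : ∀ᵐ x ∂μ, (1 / q₁ x).toReal ≤ A)
    (hq : ∀ᵐ x ∂μ, (1 / q₂ x).toReal ≤ (1 / q₁ x).toReal)
    {c : ℝ≥0∞} (hc : c < 1) {h : X → ℝ≥0∞} (hh : ellLpModTerm μ p q₁ h ≤ 1) :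
    ellLpModTerm μ p q₂ (fun x => c * h x) ≤ ellLpModTerm μ p q₁ h := by
  by_contra! hlt
  have hM : 1 < c⁻¹ ^ (1 / A) := ENNReal.one_lt_rpow (ENNReal.one_lt_inv.2 hc) (by positivity)
  obtain ⟨l, hl, hlM, hl₂⟩ :
      ∃ l, ellLpModTerm μ p q₁ h < l ∧ l < c⁻¹ ^ (1 / A) ∧ l < ellLpModTerm μ p q₂ _ := by
    obtain ⟨l, hl, hl'⟩ := exists_between (lt_min (hh.trans_lt hM) hlt)
    exact ⟨l, hl, (lt_min_iff.1 hl').1, (lt_min_iff.1 hl').2⟩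
  have hl₀ : l ≠ 0 := (pos_of_gt hl).ne'
  have hl_top : l ≠ ⊤ := hlM.ne_top
  have hcl : c * l ^ A ≤ 1 :=
    calc c * l ^ A ≤ c * (c⁻¹ ^ (1 / A)) ^ A := by gcongr
      _ = c * c⁻¹ := by rw [← ENNReal.rpow_mul, one_div_mul_cancel hA.ne', ENNReal.rpow_one]
      _ ≤ 1 := ENNReal.mul_inv_le_one c
  refine hl₂.not_ge (sInf_le ⟨pos_of_gt hl, hl_top, ?_⟩)
  refine le_trans (modE_mono_ae hp ?_) (modE_le_one_of_ellLpModTerm_lt hp hl)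
  filter_upwards [hq₁, hq] with x hx₁ hx
  refine ENNReal.mul_div_le_div_of_mul_le (ENNReal.rpow_pos (pos_iff_ne_zero.2 hl₀) hl_top).ne'
    (ENNReal.rpow_ne_top_of_nonneg ENNReal.toReal_nonneg hl_top) ?_
  exact ENNReal.mul_rpow_le_rpow hc.le hcl ENNReal.toReal_nonneg hx hx₁

lemma ellLpNorm_anti (hp : ∀ᵐ x ∂μ, 0 ≤ p x) {q₁ q₂ : X → ℝ≥0∞} {ε : ℝ≥0∞} (hε : 0 < ε)
    (hq₁ : ∀ᵐ x ∂μ, ε ≤ q₁ x) (hq : ∀ᵐ x ∂μ, q₁ x ≤ q₂ x) (g : ℤ → X → ℝ≥0∞) :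
    ellLpNorm μ p q₂ g ≤ ellLpNorm μ p q₁ g := by
  have hε_inv : 1 / ε ≠ ⊤ := by simp [hε.ne']
  have hq₁A : ∀ᵐ x ∂μ, (1 / q₁ x).toReal ≤ (1 / ε).toReal + 1 := by
    filter_upwards [hq₁] with x hx
    linarith [ENNReal.toReal_mono hε_inv (ENNReal.div_le_div_left hx 1)]
  have hq' : ∀ᵐ x ∂μ, (1 / q₂ x).toReal ≤ (1 / q₁ x).toReal := by
    filter_upwards [hq₁, hq] with x hx₁ hx
    exact ENNReal.toReal_mono (ne_top_of_le_ne_top hε_inv (ENNReal.div_le_div_left hx₁ 1))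
      (ENNReal.div_le_div_left hx 1)
  refine le_sInf fun l ⟨hl₀, hl_top, hmod⟩ => le_of_forall_gt_imp_ge_of_dense fun l' hll' => ?_
  rcases eq_or_ne l' ⊤ with rfl | hl'_top
  · exact le_top
  have hl'₀ : l' ≠ 0 := (hl₀.trans hll').ne'
  have hc : l / l' < 1 := by rwa [ENNReal.div_lt_iff (Or.inl hl'₀) (Or.inl hl'_top), one_mul]
  have hscale : ∀ k, (fun x => g k x / l') = fun x => l / l' * (g k x / l) := fun k => by
    funext x
    simp only [div_eq_mul_inv]
    rw [show l * l'⁻¹ * (g k x * l⁻¹) = l * l⁻¹ * (g k x * l'⁻¹) by ring,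
      ENNReal.mul_inv_cancel hl₀.ne' hl_top, one_mul]
  have hterm : ∀ k, ellLpModTerm μ p q₁ (fun x => g k x / l) ≤ 1 := fun k =>
    (ENNReal.le_tsum k).trans hmod
  refine sInf_le ⟨hl₀.trans hll', hl'_top, ?_⟩
  calc ellLpMod μ p q₂ (fun k x => g k x / l')
      = ∑' k, ellLpModTerm μ p q₂ (fun x => l / l' * (g k x / l)) := by
        simp only [ellLpMod_eq_tsum, hscale]
    _ ≤ ∑' k, ellLpModTerm μ p q₁ (fun x => g k x / l) :=
        ENNReal.tsum_le_tsum fun k => ellLpModTerm_mul_le hp (by positivity) hq₁A hq' hc (hterm k)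
    _ ≤ 1 := hmod

end MixedNorms

theorem mixed_norm_monotone_general {X : Type*} [MeasurableSpace X] (μ : Measure X) (p : X → ℝ)
    (hp : ∃ c C : ℝ, 0 < c ∧ ∀ᵐ x ∂μ, c ≤ p x ∧ p x ≤ C)
    (q1 q2 : X → ℝ≥0∞) (hq1 : ∃ ε : ℝ≥0∞, 0 < ε ∧ ∀ᵐ x ∂μ, ε ≤ q1 x)
    (hle : ∀ x, q1 x ≤ q2 x)
    (g : ℤ → X → ℝ≥0∞) :
    ellLpNorm μ p q2 g ≤ ellLpNorm μ p q1 g ∧ LpEllNorm μ p q2 g ≤ LpEllNorm μ p q1 g := by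
  obtain ⟨c, _, hc, hcp⟩ := hp
  obtain ⟨ε, hε, hεq⟩ := hq1
  have hp₀ : ∀ᵐ x ∂μ, 0 ≤ p x := hcp.mono fun x hx => hc.le.trans hx.1
  have hq₁₀ : ∀ᵐ x ∂μ, q1 x ≠ 0 := hεq.mono fun x hx => (hε.trans_le hx).ne'
  exact ⟨ellLpNorm_anti hp₀ hε hεq (.of_forall hle) g,
    lpEllNorm_anti hp₀ hq₁₀ (.of_forall hle) g⟩

/-- Monotonicity of the mixed Lebesgue-sequence quasi-norms in the sequence exponent:
if `q₁ ≤ q₂` pointwise, then the `ℓ^{q₂(·)}(L^{p(·)})` and `L^{p(·)}(ℓ^{q₂(·)})` quasi-norms are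
dominated by the corresponding ones with exponent `q₁`. -/
theorem mixed_norm_monotone {X : Type*} [MeasurableSpace X] (μ : Measure X) (p : X → ℝ)
    (hp : ∃ c C : ℝ, 0 < c ∧ ∀ᵐ x ∂μ, c ≤ p x ∧ p x ≤ C)
    (q1 q2 : X → ℝ≥0∞) (hq1 : ∃ ε : ℝ≥0∞, 0 < ε ∧ ∀ᵐ x ∂μ, ε ≤ q1 x)
    (hle : ∀ x, q1 x ≤ q2 x)
    (g : ℤ → X → ℝ≥0∞) (hg : ∀ k, Measurable (g k)) (hgL : ∀ k, luxE μ p (g k) < ⊤) :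
    ellLpNorm μ p q2 g ≤ ellLpNorm μ p q1 g ∧ LpEllNorm μ p q2 g ≤ LpEllNorm μ p q1 g :=
  mixed_norm_monotone_general μ p hp q1 q2 hq1 hle g

end
end

section
/- Let (X,d) be a metric space with a nonnegative Borel measure μ and let p, s be bounded variable exponents. If u ∈ Ṁ^{s(·),p(·)}(X,d,μ) satisfies ‖u‖_{Ṁ^{s(·),p(·)}} = 0 (that is, the infimum of ‖g‖_{L^{p(·)}} over all scalar s(·)-gradients g of u is zero), then u is constant μ-almost everywhere. -/
/-!
Choose scalar `s(·)`-gradients `gₙ` with `‖gₙ‖_{L^{p(·)}} < 2⁻ⁿ · 2^{-n/c}`, where `c > 0`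
bounds `p` from below. A Chebyshev estimate for the Luxemburg norm gives `μ {gₙ ≥ 2⁻ⁿ} ≤ 2⁻ⁿ`,
so by Borel–Cantelli `gₙ → 0` almost everywhere. Outside a null set the gradient inequality then
forces `|u x - u y| ≤ d(x,y)^{s(x)} gₙ(x) + d(x,y)^{s(y)} gₙ(y) → 0`.
-/

open MeasureTheory Metric ENNReal

noncomputable section

open Filter Topology

section Chebyshev

variable {X : Type*} [MeasurableSpace X] {μ : Measure X} {p : X → ℝ} {c : ℝ} {g : X → ℝ≥0∞}

lemma meas_le_le_div_rpow_of_modE_le_one (hc : 0 < c) (hpc : ∀ x, c ≤ p x) (hg : Measurable g)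
    {l t : ℝ≥0∞} (hl0 : l ≠ 0) (hltop : l ≠ ⊤) (hlt : l ≤ t)
    (hmod : modE μ p (fun x => g x / l) ≤ 1) :
    μ {x | t ≤ g x} ≤ (l / t) ^ c := by
  have hone : 1 ≤ t / l :=
    (ENNReal.le_div_iff_mul_le (Or.inl hl0) (Or.inl hltop)).2 (by rwa [one_mul])
  have key : (t / l) ^ c * μ {x | t ≤ g x} ≤ 1 := calc
    _ = ∫⁻ _ in {x | t ≤ g x}, (t / l) ^ c ∂μ := (setLIntegral_const _ _).symm
    _ ≤ ∫⁻ x in {x | t ≤ g x}, (g x / l) ^ p x ∂μ :=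
        setLIntegral_mono' (measurableSet_le measurable_const hg) fun x hx =>
          (ENNReal.rpow_le_rpow_of_exponent_le hone (hpc x)).trans
            (ENNReal.rpow_le_rpow (by gcongr; exact hx) (hc.le.trans (hpc x)))
    _ ≤ modE μ p (fun x => g x / l) := setLIntegral_le_lintegral _ _
    _ ≤ 1 := hmod
  rw [← ENNReal.inv_div (Or.inl hltop) (Or.inl hl0), ENNReal.inv_rpow]
  exact ENNReal.le_inv_iff_mul_le.2 (by rwa [mul_comm])

lemma meas_le_le_of_luxE_lt_mul_rpow (hc : 0 < c) (hpc : ∀ x, c ≤ p x) (hg : Measurable g)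
    {t : ℝ≥0∞} (ht1 : t ≤ 1) (h : luxE μ p g < t * t ^ (1 / c)) :
    μ {x | t ≤ g x} ≤ t := by
  obtain ⟨l, ⟨hl0, hltop, hmod⟩, hlt⟩ := sInf_lt_iff.1 h
  have hlt' : l ≤ t :=
    hlt.le.trans (mul_le_of_le_one_right' (ENNReal.rpow_le_one ht1 (by positivity)))
  calc μ {x | t ≤ g x} ≤ (l / t) ^ c :=
        meas_le_le_div_rpow_of_modE_le_one hc hpc hg hl0.ne' hltop hlt' hmod
    _ ≤ (t ^ (1 / c)) ^ c := by gcongr; exact ENNReal.div_le_of_le_mul' hlt.le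
    _ = t := by rw [← ENNReal.rpow_mul, one_div_mul_cancel hc.ne', ENNReal.rpow_one]

end Chebyshev

lemma ae_tendsto_zero_of_tsum_measure_le_ne_top {X : Type*} [MeasurableSpace X] {μ : Measure X}
    {f : ℕ → X → ℝ≥0∞} {t : ℕ → ℝ≥0∞} (ht : Tendsto t atTop (𝓝 0))
    (hsum : ∑' n, μ {x | t n ≤ f n x} ≠ ⊤) :
    ∀ᵐ x ∂μ, Tendsto (f · x) atTop (𝓝 0) := by
  filter_upwards [ae_eventually_notMem hsum] with x hx
  exact tendsto_of_tendsto_of_tendsto_of_le_of_le' tendsto_const_nhds ht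
    (Eventually.of_forall fun _ => zero_le) (hx.mono fun _ hn => (not_le.1 hn).le)

lemma eq_of_ofReal_abs_sub_le_of_tendsto_zero {a b : ℝ} {A B : ℝ≥0∞} (hA : A ≠ ⊤) (hB : B ≠ ⊤)
    {f g : ℕ → ℝ≥0∞} (hf : Tendsto f atTop (𝓝 0)) (hg : Tendsto g atTop (𝓝 0))
    (hle : ∀ n, ENNReal.ofReal |a - b| ≤ A * f n + B * g n) : a = b := by
  have hlim : Tendsto (fun n => A * f n + B * g n) atTop (𝓝 0) := by
    simpa using (ENNReal.Tendsto.const_mul hf (Or.inr hA)).add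
      (ENNReal.Tendsto.const_mul hg (Or.inr hB))
  have h0 : ENNReal.ofReal |a - b| ≤ 0 := ge_of_tendsto' hlim hle
  rw [nonpos_iff_eq_zero, ENNReal.ofReal_eq_zero, abs_nonpos_iff, sub_eq_zero] at h0
  exact h0

lemma exists_ae_eq_const_of_pairwise_eq {X β : Type*} [MeasurableSpace X] [Nonempty β]
    {μ : Measure X} {P : X → Prop} {u : X → β} (hP : ∀ᵐ x ∂μ, P x)
    (hu : ∀ x y, P x → P y → u x = u y) : ∃ c, ∀ᵐ x ∂μ, u x = c := by
  by_cases h : ∃ x₀, P x₀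
  · obtain ⟨x₀, hx₀⟩ := h
    exact ⟨u x₀, hP.mono fun x hx => hu x x₀ hx hx₀⟩
  · exact ⟨Classical.arbitrary β, hP.mono fun x hx => absurd ⟨x, hx⟩ h⟩

theorem constant_of_zero_hajlasz_seminorm_general {X : Type*} [MetricSpace X] [MeasurableSpace X]
    (μ : Measure X) (p s : X → ℝ)
    (hp : ∃ c C : ℝ, 0 < c ∧ ∀ x, c ≤ p x ∧ p x ≤ C)
    (u : X → ℝ)
    (hzero : sInf ((fun g => luxE μ p g) '' {g | IsSGradOn μ Set.univ s u g}) = 0) :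
    ∃ c : ℝ, ∀ᵐ x ∂μ, u x = c := by
  obtain ⟨c, _, hc, hpc⟩ := hp
  set t : ℕ → ℝ≥0∞ := fun n => 2⁻¹ ^ n
  have hsmall : ∀ n, ∃ g, IsSGradOn μ Set.univ s u g ∧ luxE μ p g < t n * t n ^ (1 / c) := by
    intro n
    have ht0 : t n ≠ 0 := pow_ne_zero n (by simp)
    have hpos : 0 < t n * t n ^ (1 / c) := ENNReal.mul_pos ht0
      (ENNReal.rpow_pos (pos_iff_ne_zero.2 ht0) (ENNReal.pow_ne_top (by simp))).ne'
    obtain ⟨_, ⟨g, hg, rfl⟩, hlt⟩ := sInf_lt_iff.1 (hzero ▸ hpos)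
    exact ⟨g, hg, hlt⟩
  choose g hg hlux using hsmall
  have hmeas (n : ℕ) : μ {x | t n ≤ g n x} ≤ t n :=
    meas_le_le_of_luxE_lt_mul_rpow hc (fun x => (hpc x).1) (hg n).1
      (pow_le_one₀ zero_le (ENNReal.inv_le_one.2 one_le_two)) (hlux n)
  have hsum : ∑' n, μ {x | t n ≤ g n x} ≠ ⊤ :=
    ne_top_of_le_ne_top (by simp [t, ENNReal.tsum_geometric]) (ENNReal.tsum_le_tsum hmeas)
  have htend := ae_tendsto_zero_of_tsum_measure_le_ne_top
    (ENNReal.tendsto_pow_atTop_nhds_zero_of_lt_one (by norm_num)) hsum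
  choose N _ hN0 hN using fun n => (hg n).2
  have hNc : ∀ᵐ x ∂μ, ∀ n, x ∉ N n :=
    ae_all_iff.2 fun n => measure_eq_zero_iff_ae_notMem.1 (hN0 n)
  refine exists_ae_eq_const_of_pairwise_eq (htend.and hNc) ?_
  rintro x y ⟨hx, hxN⟩ ⟨hy, hyN⟩
  exact eq_of_ofReal_abs_sub_le_of_tendsto_zero ENNReal.ofReal_ne_top ENNReal.ofReal_ne_top hx hy
    fun n => hN n x ⟨trivial, hxN n⟩ y ⟨trivial, hyN n⟩

/-- If `u` has vanishing homogeneous Hajłasz–Sobolev quasi-seminorm — i.e. the infimum over all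
scalar `s(·)`-gradients `g` of `u` of `‖g‖_{L^{p(·)}}` equals zero — then `u` is constant
`μ`-a.e. -/
theorem constant_of_zero_hajlasz_seminorm {X : Type*} [MetricSpace X] [MeasurableSpace X]
    [BorelSpace X] (μ : Measure X) (p s : X → ℝ)
    (hp : ∃ c C : ℝ, 0 < c ∧ ∀ x, c ≤ p x ∧ p x ≤ C)
    (hs : ∃ c C : ℝ, 0 < c ∧ ∀ x, c ≤ s x ∧ s x ≤ C)
    (u : X → ℝ) (hu : Measurable u)
    (hzero : sInf ((fun g => luxE μ p g) '' {g | IsSGradOn μ Set.univ s u g}) = 0) :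
    ∃ c : ℝ, ∀ᵐ x ∂μ, u x = c :=
  constant_of_zero_hajlasz_seminorm_general μ p s hp u hzero

end
end

section
/- Let (X,d,μ) be a metric measure space with p, s bounded variable exponents. Then the homogeneous Hajłasz–Triebel–Lizorkin space with q ≡ ∞ coincides with the homogeneous Hajłasz–Sobolev space: Ṁ^{s(·)}_{p(·),∞}(X,d,μ) = Ṁ^{s(·),p(·)}(X,d,μ), with equal quasi-semi-norms. -/
open MeasureTheory Metric ENNReal

noncomputable section

/-! For `q ≡ ∞` the `ℓ^∞`-norm of a vector gradient is its pointwise supremum. A scalar gradient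
`g` is a vector gradient as the constant sequence, whose supremum is `g`; conversely, since every
pair of distinct points lies at exactly one dyadic scale, the supremum `⨆ k, g k` of a vector
gradient is a scalar gradient. The two infima therefore range over the same values. -/

lemma exists_dyadic_scale {d : ℝ} (hd : 0 < d) :
    ∃ k : ℤ, (2 : ℝ) ^ (-(k : ℝ) - 1) ≤ d ∧ d < (2 : ℝ) ^ (-(k : ℝ)) := by
  obtain ⟨n, hn_le, hlt_n⟩ := exists_mem_Ico_zpow hd (by norm_num : (1 : ℝ) < 2)
  have h_lower : (2 : ℝ) ^ (-((-(n + 1) : ℤ) : ℝ) - 1) = 2 ^ n := by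
    rw [← Real.rpow_intCast]; push_cast; ring_nf
  have h_upper : (2 : ℝ) ^ (-((-(n + 1) : ℤ) : ℝ)) = 2 ^ (n + 1) := by
    rw [← Real.rpow_intCast]; push_cast; ring_nf
  exact ⟨-(n + 1), h_lower ▸ hn_le, h_upper ▸ hlt_n⟩

section Gradients

variable {X : Type*} [MeasurableSpace X] {μ : Measure X} {E : Set X} {s u : X → ℝ}

lemma IsSGradOn.isVGradOn_const [PseudoMetricSpace X] {g : X → ℝ≥0∞}
    (hg : IsSGradOn μ E s u g) : IsVGradOn μ E s u (fun _ => g) := by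
  obtain ⟨hg_meas, N, hNE, hN0, hgrad⟩ := hg
  exact ⟨fun _ => hg_meas, N, hNE, hN0, fun x hx y hy _ _ _ => hgrad x hx y hy⟩

lemma IsVGradOn.isSGradOn_iSup [MetricSpace X] {g : ℤ → X → ℝ≥0∞}
    (hg : IsVGradOn μ E s u g) : IsSGradOn μ E s u (fun x => ⨆ k, g k x) := by
  obtain ⟨hg_meas, N, hNE, hN0, hgrad⟩ := hg
  refine ⟨Measurable.iSup hg_meas, N, hNE, hN0, fun x hx y hy => ?_⟩
  rcases eq_or_ne x y with rfl | hxy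
  · simp
  obtain ⟨k, hk_le, hk_lt⟩ := exists_dyadic_scale (dist_pos.2 hxy)
  calc ENNReal.ofReal |u x - u y|
      ≤ ENNReal.ofReal (dist x y ^ s x) * g k x + ENNReal.ofReal (dist x y ^ s y) * g k y :=
        hgrad x hx y hy k hk_le hk_lt
    _ ≤ ENNReal.ofReal (dist x y ^ s x) * (⨆ k, g k x)
          + ENNReal.ofReal (dist x y ^ s y) * (⨆ k, g k y) := by
        gcongr <;> exact le_iSup (fun k => g k _) k

end Gradients

lemma LpEllNorm_top {X : Type*} [MeasurableSpace X] (μ : Measure X) (p : X → ℝ)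
    (g : ℤ → X → ℝ≥0∞) : LpEllNorm μ p (fun _ => ⊤) g = luxE μ p (fun x => ⨆ k, g k x) := by
  simp only [LpEllNorm, seqNormE, if_true]

theorem TL_inftyEq_hajlaszSobolev_general {X : Type*} [MetricSpace X] [MeasurableSpace X]
    (μ : Measure X) (p s : X → ℝ) (u : X → ℝ) :
    TLNormOn μ Set.univ p (fun _ => (⊤ : ℝ≥0∞)) s u = MNormOn μ Set.univ p s u := by
  apply le_antisymm <;> apply sInf_le_sInf
  · rintro _ ⟨g, hg, rfl⟩
    refine ⟨fun _ => g, hg.isVGradOn_const, ?_⟩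
    simp only [LpEllNorm_top, iSup_const]
  · rintro _ ⟨g, hg, rfl⟩
    exact ⟨_, hg.isSGradOn_iSup, (LpEllNorm_top _ _ _).symm⟩

/-- The homogeneous Hajłasz–Triebel–Lizorkin space with `q ≡ ∞` coincides with the homogeneous
Hajłasz–Sobolev space, with equal quasi-seminorms:
`‖u‖_{Ṁ^{s(·)}_{p(·),∞}} = ‖u‖_{Ṁ^{s(·),p(·)}}` for every measurable `u`. -/
theorem TL_inftyEq_hajlaszSobolev {X : Type*} [MetricSpace X] [MeasurableSpace X]
    [BorelSpace X] (μ : Measure X) (p s : X → ℝ)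
    (hp : ∃ c C : ℝ, 0 < c ∧ ∀ x, c ≤ p x ∧ p x ≤ C)
    (hs : ∃ c C : ℝ, 0 < c ∧ ∀ x, c ≤ s x ∧ s x ≤ C)
    (u : X → ℝ) (hu : Measurable u) :
    TLNormOn μ Set.univ p (fun _ => (⊤ : ℝ≥0∞)) s u = MNormOn μ Set.univ p s u :=
  TL_inftyEq_hajlaszSobolev_general μ p s u

end
end

section
/- Let (X,d,μ) be a uniformly perfect metric measure space with uniform perfectness constant λ ∈ (0,1/5), and let Q be a bounded log-Hölder-continuous variable exponent. Define φ_x(r) := sup{s ∈ [0,r] : μ(B(x,s)) ≤ μ(B(x,r))/2}. If there exists C > 0 such that μ(B(x,r)) ≥ C r^{Q(x)} whenever x ∈ X and r ∈ (0, min{1, diam X}] satisfy r ≤ 3 φ_x(r)/λ², then μ(B(x,r)) ≥ C' r^{Q(x)} for all x ∈ X and all r ∈ (0,1], where C' := min{μ(X), C λ^{Q^+} e^{-C_log(Q)} 2^{-Q^+}}. -/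
/-!
If `r ≤ 3 φ_x(r)/λ²` the hypothesis applies at `(x, r)` itself. Otherwise `B(x, λ²r/3)` carries
more than half of the mass of `B(x, r)`. Uniform perfectness gives `y` with `λt ≤ d(x, y) < t`
for `t = r/2 - λ²r/3`; then `B(y, r/2) ⊆ B(x, r)` contains `B(x, λ²r/3)` and also the ball
`B(y, λt - λ²r/3)` disjoint from it, which therefore carries at most half of the mass of
`B(y, r/2)`. As `λ²r/2 ≤ 3(λt - λ²r/3)`, the hypothesis applies at `(y, r/2)`, and log-Hölder
continuity of `Q` turns `(r/2)^{Q(y)}` into `r^{Q(x)}` at the cost of `e^{-C_log(Q)} 2^{-Q⁺}`.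
-/

open MeasureTheory Metric ENNReal

lemma Real.rpow_le_exp_mul_rpow {r : ℝ} (hr : 0 < r) (a b : ℝ) :
    r ^ a ≤ Real.exp (|a - b| * |Real.log r|) * r ^ b := by
  have hab : r ^ a = Real.exp ((a - b) * Real.log r) * r ^ b := by
    rw [Real.rpow_def_of_pos hr, Real.rpow_def_of_pos hr, ← Real.exp_add]
    ring_nf
  rw [hab, ← abs_mul]
  gcongr
  exact le_abs_self _

lemma Real.abs_log_le_log_exp_add_inv {d r : ℝ} (hd : 0 < d) (hdr : d ≤ r) (hr1 : r ≤ 1) :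
    |Real.log r| ≤ Real.log (Real.exp 1 + 1 / d) := by
  rw [abs_of_nonpos (Real.log_nonpos (hd.trans_le hdr).le hr1), ← Real.log_inv]
  refine Real.log_le_log (inv_pos.2 (hd.trans_le hdr)) ?_
  calc r⁻¹ ≤ 1 / d := by rw [one_div]; exact inv_anti₀ hd hdr
    _ ≤ Real.exp 1 + 1 / d := le_add_of_nonneg_left (Real.exp_pos 1).le

lemma Real.exp_neg_mul_rpow_le_rpow_of_logHolder {d r K a b : ℝ} (hd : 0 < d) (hdr : d ≤ r)
    (hr1 : r ≤ 1) (hab : |a - b| ≤ K / Real.log (Real.exp 1 + 1 / d)) :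
    Real.exp (-K) * r ^ a ≤ r ^ b := by
  have hL : 0 < Real.log (Real.exp 1 + 1 / d) :=
    Real.log_pos (by linarith [Real.add_one_lt_exp one_ne_zero, one_div_pos.2 hd])
  have hK : |a - b| * |Real.log r| ≤ K :=
    calc |a - b| * |Real.log r| ≤ |a - b| * Real.log (Real.exp 1 + 1 / d) := by
          gcongr; exact Real.abs_log_le_log_exp_add_inv hd hdr hr1
      _ ≤ K := (le_div_iff₀ hL).1 hab
  rw [← le_div_iff₀' (Real.exp_pos _), div_eq_mul_inv, ← Real.exp_neg, neg_neg]
  calc r ^ a ≤ Real.exp (|a - b| * |Real.log r|) * r ^ b :=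
        Real.rpow_le_exp_mul_rpow (hd.trans_le hdr) a b
    _ ≤ Real.exp K * r ^ b := by gcongr; exact Real.rpow_nonneg (hd.le.trans hdr) b
    _ = r ^ b * Real.exp K := mul_comm _ _

lemma two_rpow_neg_mul_rpow_le_half_rpow {r b p : ℝ} (hr : 0 ≤ r) (hbp : b ≤ p) :
    2 ^ (-p) * r ^ b ≤ (r / 2) ^ b := by
  rw [Real.div_rpow hr zero_le_two, div_eq_mul_inv, ← Real.rpow_neg zero_le_two, mul_comm]
  gcongr
  exact one_le_two

lemma ENNReal.min_mul_ofReal_rpow_le_left (a b : ℝ≥0∞) {r q : ℝ} (hr : 0 ≤ r) (hr1 : r ≤ 1)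
    (hq : 0 ≤ q) : min a b * ENNReal.ofReal (r ^ q) ≤ a :=
  (mul_le_mul' (min_le_left a b) (ofReal_le_one.2 (Real.rpow_le_one hr hr1 hq))).trans_eq
    (mul_one a)

lemma ofReal_le_ediam_univ_of_nonempty_compl_ball {X : Type*} [PseudoMetricSpace X] {x : X}
    {r : ℝ} (h : (Set.univ \ ball x r).Nonempty) :
    ENNReal.ofReal r ≤ ediam (Set.univ : Set X) := by
  obtain ⟨z, -, hz⟩ := h
  calc ENNReal.ofReal r ≤ edist z x := by
        rw [edist_dist]; exact ENNReal.ofReal_le_ofReal (not_lt.1 hz)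
    _ ≤ ediam (Set.univ : Set X) := edist_le_ediam_of_mem trivial trivial

lemma MeasureTheory.measure_le_half_of_disjoint {α : Type*} [MeasurableSpace α] {μ : Measure α}
    {A B U : Set α} (hAB : Disjoint A B) (hB : MeasurableSet B) (hAU : A ⊆ U) (hBU : B ⊆ U)
    (hU : μ U ≠ ⊤) (hhalf : μ U / 2 ≤ μ B) :
    μ A ≤ μ U / 2 :=
  calc μ A ≤ μ (U \ B) := measure_mono (Set.subset_sdiff.2 ⟨hAU, hAB⟩)
    _ = μ U - μ B :=
        measure_sdiff hBU hB.nullMeasurableSet (ne_top_of_le_ne_top hU (measure_mono hBU))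
    _ ≤ μ U - μ U / 2 := tsub_le_tsub_left hhalf _
    _ = μ U / 2 := ENNReal.sub_half hU

section halfMeasureRadius

variable {X : Type*} [PseudoMetricSpace X] [MeasurableSpace X]

/-- The radius `φ_x(r)` of the paper. -/
noncomputable def halfMeasureRadius (μ : Measure X) (x : X) (r : ℝ) : ℝ :=
  sSup {s : ℝ | s ∈ Set.Icc 0 r ∧ μ (ball x s) ≤ μ (ball x r) / 2}

variable {μ : Measure X} {x : X} {r s : ℝ}

lemma le_halfMeasureRadius (hs : 0 ≤ s) (hsr : s ≤ r) (hμs : μ (ball x s) ≤ μ (ball x r) / 2) :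
    s ≤ halfMeasureRadius μ x r :=
  le_csSup ⟨r, fun _ ht => ht.1.2⟩ ⟨⟨hs, hsr⟩, hμs⟩

lemma half_lt_measure_ball_of_halfMeasureRadius_lt (hs : 0 ≤ s) (hsr : s ≤ r)
    (hφ : halfMeasureRadius μ x r < s) :
    μ (ball x r) / 2 < μ (ball x s) :=
  lt_of_not_ge fun hμs => (le_halfMeasureRadius hs hsr hμs).not_gt hφ

end halfMeasureRadius

lemma exists_ball_half_subset_of_halfMeasureRadius_lt {X : Type*} [PseudoMetricSpace X]
    [MeasurableSpace X] [OpensMeasurableSpace X] {μ : Measure X} {x : X} {r lam : ℝ}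
    (hr : 0 < r) (hlam0 : 0 < lam) (hlam1 : lam ≤ 1 / 2) (hfin : μ (ball x r) ≠ ⊤)
    (hup : ∀ t, 0 < t → (Set.univ \ ball x t).Nonempty → (ball x t \ ball x (lam * t)).Nonempty)
    (hout : (Set.univ \ ball x r).Nonempty) (hφ : 3 * halfMeasureRadius μ x r / lam ^ 2 < r) :
    ∃ y, 0 < dist x y ∧ dist x y ≤ r ∧ ball y (r / 2) ⊆ ball x r ∧
      r / 2 ≤ 3 * halfMeasureRadius μ y (r / 2) / lam ^ 2 := by
  set ρ := lam ^ 2 * r / 3 with hρ_def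
  set t := r / 2 - ρ with ht_def
  set s := lam * t - ρ with hs_def
  have hlam_sq : lam ^ 2 ≤ 1 / 4 := by nlinarith
  have hρ : 0 < ρ := by positivity
  have ht : 0 < t := by nlinarith
  have hlamt : 0 < lam * t := by positivity
  have hs : 0 < s := by nlinarith
  have hsu : s ≤ r / 2 := by nlinarith
  have hs3 : r / 2 * lam ^ 2 ≤ 3 * s := by nlinarith [mul_pos hlam0 hr]
  obtain ⟨y, hyt, hylam⟩ :=
    hup t ht (hout.mono (Set.sdiff_subset_sdiff_right (ball_subset_ball (by linarith))))
  rw [mem_ball] at hyt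
  rw [mem_ball, not_lt] at hylam
  have hsub : ball y (r / 2) ⊆ ball x r := ball_subset_ball' (by linarith)
  replace hφ : halfMeasureRadius μ x r < ρ := by
    rw [div_lt_iff₀ (by positivity)] at hφ
    linarith
  have hhalf : μ (ball y (r / 2)) / 2 ≤ μ (ball x ρ) :=
    (ENNReal.div_le_div_right (measure_mono hsub) 2).trans
      (half_lt_measure_ball_of_halfMeasureRadius_lt hρ.le (by linarith) hφ).le
  have hsmall : μ (ball y s) ≤ μ (ball y (r / 2)) / 2 :=
    measure_le_half_of_disjoint (ball_disjoint_ball (by linarith)) measurableSet_ball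
      (ball_subset_ball hsu) (ball_subset_ball' (by rw [dist_comm]; linarith))
      (ne_top_of_le_ne_top hfin (measure_mono hsub)) hhalf
  refine ⟨y, by rw [dist_comm]; linarith, by rw [dist_comm]; linarith, hsub, ?_⟩
  rw [le_div_iff₀ (by positivity)]
  calc r / 2 * lam ^ 2 ≤ 3 * s := hs3
    _ ≤ 3 * halfMeasureRadius μ y (r / 2) := by
        gcongr; exact le_halfMeasureRadius hs.le hsu hsmall
/-- On a uniformly perfect metric measure space with constant `lam ∈ (0,1/5)`, if the lower
Ahlfors bound `μ(B(x,r)) ≥ C r^{Q(x)}` holds for all radii `r ∈ (0, min{1, diam X}]` with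
`r ≤ 3 φ_x(r)/lam²`, where `φ_x(r) = sup{s ∈ [0,r] : μ(B(x,s)) ≤ μ(B(x,r))/2}`, then
`μ(B(x,r)) ≥ C' r^{Q(x)}` for all `x ∈ X` and `r ∈ (0,1]`, where
`C' = min{μ(X), C lam^{Q⁺} e^{-C_log(Q)} 2^{-Q⁺}}`. -/
theorem lower_ahlfors_of_uniformly_perfect {X : Type*} [MetricSpace X] [MeasurableSpace X]
    [BorelSpace X] (μ : Measure X)
    (hμ : ∀ (x : X) (r : ℝ), 0 < r → 0 < μ (ball x r) ∧ μ (ball x r) < ⊤)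
    (lam : ℝ) (hlam0 : 0 < lam) (hlam1 : lam < 1 / 5)
    (hup : ∀ (x : X) (r : ℝ), 0 < r → (Set.univ \ ball x r).Nonempty →
      (ball x r \ ball x (lam * r)).Nonempty)
    (Q : X → ℝ) (Qm Qp : ℝ) (hQm : 0 < Qm) (hQbd : ∀ x, Qm ≤ Q x ∧ Q x ≤ Qp)
    (CQ : ℝ) (hCQ : 0 ≤ CQ)
    (hQlog : ∀ x y : X, |Q x - Q y| ≤ CQ / Real.log (Real.exp 1 + 1 / dist x y))
    (φ : X → ℝ → ℝ)
    (hφ : φ = fun x r => sSup {s : ℝ | s ∈ Set.Icc 0 r ∧ μ (ball x s) ≤ μ (ball x r) / 2})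
    (C : ℝ) (hC : 0 < C)
    (hAhl : ∀ (x : X) (r : ℝ), 0 < r →
      ENNReal.ofReal r ≤ min 1 (EMetric.diam (Set.univ : Set X)) →
      r ≤ 3 * φ x r / lam ^ 2 →
      ENNReal.ofReal (C * r ^ Q x) ≤ μ (ball x r)) :
    ∀ (x : X) (r : ℝ), 0 < r → r ≤ 1 →
      min (μ Set.univ)
          (ENNReal.ofReal (C * lam ^ Qp * Real.exp (-CQ) * 2 ^ (-Qp))) *
        ENNReal.ofReal (r ^ Q x) ≤ μ (ball x r) := by
  intro x r hr hr1
  have hQx : 0 ≤ Q x := hQm.le.trans (hQbd x).1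
  have hQp : 0 ≤ Qp := hQx.trans (hQbd x).2
  rcases (Set.univ \ ball x r).eq_empty_or_nonempty with hfull | hout
  · rw [Set.sdiff_eq_empty, Set.univ_subset_iff] at hfull
    rw [hfull]
    exact min_mul_ofReal_rpow_le_left _ _ hr.le hr1 hQx
  have hrad : ENNReal.ofReal r ≤ min 1 (ediam (Set.univ : Set X)) :=
    le_min (ofReal_le_one.2 hr1) (ofReal_le_ediam_univ_of_nonempty_compl_ball hout)
  refine (mul_le_mul' (min_le_right _ _) le_rfl).trans ?_
  rw [← ofReal_mul (by positivity)]
  refine le_trans (ofReal_le_ofReal (q := C * 2 ^ (-Qp) * (Real.exp (-CQ) * r ^ Q x)) ?_) ?_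
  · calc _ ≤ C * 1 * Real.exp (-CQ) * 2 ^ (-Qp) * r ^ Q x := by
          gcongr
          exact Real.rpow_le_one hlam0.le (by linarith) hQp
      _ = C * 2 ^ (-Qp) * (Real.exp (-CQ) * r ^ Q x) := by ring
  replace hφ : φ = halfMeasureRadius μ := hφ
  subst hφ
  by_cases hdir : r ≤ 3 * halfMeasureRadius μ x r / lam ^ 2
  · refine (ofReal_le_ofReal ?_).trans (hAhl x r hr hrad hdir)
    calc _ ≤ C * 1 * (1 * r ^ Q x) := by
          gcongr
          · exact Real.rpow_le_one_of_one_le_of_nonpos one_le_two (neg_nonpos.2 hQp)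
          · exact Real.exp_le_one_iff.2 (neg_nonpos.2 hCQ)
      _ = C * r ^ Q x := by ring
  obtain ⟨y, hxy0, hxyr, hsub, hy⟩ := exists_ball_half_subset_of_halfMeasureRadius_lt hr hlam0
    (by linarith) (hμ x r hr).2.ne (hup x) hout (not_le.1 hdir)
  have hQ := Real.exp_neg_mul_rpow_le_rpow_of_logHolder hxy0 hxyr hr1 (hQlog x y)
  calc ENNReal.ofReal _ ≤ ENNReal.ofReal (C * (r / 2) ^ Q y) := by
        refine ofReal_le_ofReal ?_
        calc _ ≤ C * (2 ^ (-Qp) * r ^ Q y) := by rw [mul_assoc]; gcongr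
          _ ≤ C * (r / 2) ^ Q y := by
              gcongr; exact two_rpow_neg_mul_rpow_le_half_rpow hr.le (hQbd y).2
    _ ≤ μ (ball y (r / 2)) :=
        hAhl y _ (half_pos hr) ((ofReal_le_ofReal (half_le_self hr.le)).trans hrad) hy
    _ ≤ μ (ball x r) := measure_mono hsub
end

section
/- Let (X,d,μ) be a metric measure space, and for x ∈ X, r ≥ 0, define φ_x(r) := sup{s ∈ [0,r] : μ(B(x,s)) ≤ μ(B(x,r))/2}. If μ({x}) = 0 and r > 0, then the iterates φ_x^j(r) (with φ_x^0(r) = r and φ_x^j(r) = φ_x(φ_x^{j-1}(r))) satisfy: φ_x^j(r) > 0 for all j, the sequence {φ_x^j(r)} is strictly decreasing, μ(B(x, φ_x^j(r))) ≤ 2^{-j} μ(B(x,r)), and consequently μ(B(x, φ_x^j(r))) → 0 as j → ∞. -/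
open MeasureTheory Metric ENNReal Filter

/-!
The radius `φ_x(t)` is the supremum of the radii whose ball has at most half the mass of `B(x,t)`.
Continuity of `μ` from below shows that `B(x, φ_x(t))` itself has at most half that mass, which
forces `φ_x(t) < t`; continuity from above, together with `μ {x} = 0`, shows that small balls have
less than half the mass, so `φ_x(t) > 0`.
-/

namespace ENNReal

theorem le_div_two_pow_of_le_half {u : ℕ → ℝ≥0∞} (h : ∀ n, u (n + 1) ≤ u n / 2) (n : ℕ) :
    u n ≤ u 0 / 2 ^ n := by
  induction n with
  | zero => simp
  | succ n ih =>
    calc u (n + 1) ≤ u n / 2 := h n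
      _ ≤ u 0 / 2 ^ n / 2 := by gcongr
      _ = u 0 / 2 ^ (n + 1) := by
        rw [div_eq_mul_inv, div_eq_mul_inv, div_eq_mul_inv, mul_assoc,
          ← ENNReal.mul_inv (by simp) (by simp), ← pow_succ]

theorem tendsto_div_two_pow {a : ℝ≥0∞} (ha : a ≠ ∞) :
    Tendsto (fun n : ℕ => a / 2 ^ n) atTop (nhds 0) := by
  simpa using ENNReal.Tendsto.const_div
    (ENNReal.tendsto_pow_atTop_nhds_top_iff.2 one_lt_two) (Or.inr ha)

end ENNReal

theorem Set.MapsTo.strictAnti_iterate {α : Type*} [Preorder α] {f : α → α} {s : Set α}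
    (hs : Set.MapsTo f s s) (hf : ∀ t ∈ s, f t < t) {r : α} (hr : r ∈ s) :
    StrictAnti fun j : ℕ => f^[j] r :=
  strictAnti_nat_of_succ_lt fun n => by
    rw [Function.iterate_succ_apply']
    exact hf _ (hs.iterate n hr)

section PseudoMetricSpace

variable {X : Type*} [PseudoMetricSpace X] [MeasurableSpace X] {μ : Measure X} {x : X}

theorem measure_ball_le_of_forall_lt {a : ℝ} {c : ℝ≥0∞}
    (h : ∀ s < a, μ (ball x s) ≤ c) : μ (ball x a) ≤ c := by
  obtain ⟨u, hu_mono, hu_lt, hu_tendsto⟩ := exists_seq_strictMono_tendsto' (sub_one_lt a)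
  have hball : ball x a = ⋃ n, ball x (u n) := by
    refine Set.Subset.antisymm (fun y hy => ?_)
      (Set.iUnion_subset fun n => ball_subset_ball (hu_lt n).2.le)
    obtain ⟨n, hn⟩ := (hu_tendsto.eventually (lt_mem_nhds (mem_ball.1 hy))).exists
    exact Set.mem_iUnion.2 ⟨n, hn⟩
  have hmono : Monotone fun n => ball x (u n) := fun m n hmn =>
    ball_subset_ball (hu_mono.monotone hmn)
  rw [hball, hmono.measure_iUnion]
  exact iSup_le fun n => h _ (hu_lt n).2

variable (μ x) in
noncomputable def halvingRadius (t : ℝ) : ℝ :=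
  sSup {s : ℝ | s ∈ Set.Icc 0 t ∧ μ (ball x s) ≤ μ (ball x t) / 2}

theorem zero_mem_halvingRadius_set {t : ℝ} (ht : 0 ≤ t) :
    (0 : ℝ) ∈ {s : ℝ | s ∈ Set.Icc 0 t ∧ μ (ball x s) ≤ μ (ball x t) / 2} :=
  ⟨⟨le_rfl, ht⟩, by simp⟩

theorem halvingRadius_le {t : ℝ} (ht : 0 ≤ t) : halvingRadius μ x t ≤ t :=
  csSup_le ⟨0, zero_mem_halvingRadius_set ht⟩ fun _ hs => hs.1.2

theorem le_halvingRadius {s t : ℝ} (hs : s ∈ Set.Icc 0 t) (hst : μ (ball x s) ≤ μ (ball x t) / 2) :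
    s ≤ halvingRadius μ x t :=
  le_csSup ⟨t, fun _ hs => hs.1.2⟩ ⟨hs, hst⟩

theorem measure_ball_halvingRadius_le {t : ℝ} (ht : 0 ≤ t) :
    μ (ball x (halvingRadius μ x t)) ≤ μ (ball x t) / 2 :=
  measure_ball_le_of_forall_lt fun _ hs =>
    let ⟨_, hs'S, hss'⟩ := exists_lt_of_lt_csSup ⟨0, zero_mem_halvingRadius_set ht⟩ hs
    (measure_mono (ball_subset_ball hss'.le)).trans hs'S.2

theorem halvingRadius_lt {t : ℝ} (ht : 0 ≤ t) (h0 : μ (ball x t) ≠ 0) (hfin : μ (ball x t) ≠ ∞) :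
    halvingRadius μ x t < t := by
  refine (halvingRadius_le ht).lt_of_ne fun heq => ?_
  have hhalf := measure_ball_halvingRadius_le (μ := μ) (x := x) ht
  rw [heq] at hhalf
  exact (ENNReal.half_lt_self h0 hfin).not_ge hhalf

end PseudoMetricSpace

section MetricSpace

variable {X : Type*} [MetricSpace X] [MeasurableSpace X] [OpensMeasurableSpace X] {μ : Measure X}
  {x : X}

theorem tendsto_measure_ball_nhdsGT_zero {R : ℝ} (hR : 0 < R) (hfin : μ (ball x R) ≠ ∞) :
    Tendsto (fun s => μ (ball x s)) (nhdsWithin 0 (Set.Ioi 0)) (nhds (μ {x})) := by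
  simpa only [thickening_singleton] using
    tendsto_measure_thickening_of_isClosed ⟨R, hR, by rwa [thickening_singleton]⟩
      (isClosed_singleton (x := x))

theorem halvingRadius_pos (hx : μ {x} = 0) {t : ℝ} (ht : 0 < t) (h0 : μ (ball x t) ≠ 0)
    (hfin : μ (ball x t) ≠ ∞) : 0 < halvingRadius μ x t := by
  have hsmall : ∀ᶠ s in nhdsWithin 0 (Set.Ioi 0), μ (ball x s) < μ (ball x t) / 2 := by
    refine (tendsto_measure_ball_nhdsGT_zero ht hfin).eventually_lt_const ?_
    rw [hx]
    exact ENNReal.half_pos h0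
  obtain ⟨s, hs_lt, hs_mem⟩ := (hsmall.and (Ioo_mem_nhdsGT ht)).exists
  exact hs_mem.1.trans_le (le_halvingRadius ⟨hs_mem.1.le, hs_mem.2.le⟩ hs_lt.le)

end MetricSpace

/-- Halving radii: with `φ_x(r) = sup{s ∈ [0,r] : μ(B(x,s)) ≤ μ(B(x,r))/2}`, if `μ({x}) = 0`
and `r > 0`, then all iterates `φ_x^j(r)` are positive, form a strictly decreasing sequence,
satisfy `μ(B(x, φ_x^j(r))) ≤ 2^{-j} μ(B(x,r))`, and hence `μ(B(x, φ_x^j(r))) → 0`. -/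
theorem halving_radii_iterates {X : Type*} [MetricSpace X] [MeasurableSpace X] [BorelSpace X]
    (μ : Measure X)
    (hμ : ∀ (x : X) (r : ℝ), 0 < r → 0 < μ (ball x r) ∧ μ (ball x r) < ⊤)
    (x : X) (hx : μ {x} = 0) (r : ℝ) (hr : 0 < r)
    (φ : ℝ → ℝ)
    (hφ : φ = fun t => sSup {s : ℝ | s ∈ Set.Icc 0 t ∧ μ (ball x s) ≤ μ (ball x t) / 2})
    (ψ : ℕ → ℝ) (hψ : ψ = fun j => φ^[j] r) :
    (∀ j : ℕ, 0 < ψ j) ∧ StrictAnti ψ ∧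
      (∀ j : ℕ, μ (ball x (ψ j)) ≤ μ (ball x r) / 2 ^ j) ∧
      Tendsto (fun j : ℕ => μ (ball x (ψ j))) atTop (nhds 0) := by
  replace hφ : φ = halvingRadius μ x := hφ
  subst hφ hψ
  have hmaps : Set.MapsTo (halvingRadius μ x) (Set.Ioi 0) (Set.Ioi 0) := fun t ht =>
    halvingRadius_pos hx ht (hμ x t ht).1.ne' (hμ x t ht).2.ne
  have hlt : ∀ t ∈ Set.Ioi (0 : ℝ), halvingRadius μ x t < t := fun t ht =>
    halvingRadius_lt ht.le (hμ x t ht).1.ne' (hμ x t ht).2.ne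
  have hmeasure : ∀ j, μ (ball x ((halvingRadius μ x)^[j] r)) ≤ μ (ball x r) / 2 ^ j :=
    ENNReal.le_div_two_pow_of_le_half fun j => by
      rw [Function.iterate_succ_apply']
      exact measure_ball_halvingRadius_le (hmaps.iterate j hr).le
  exact ⟨fun j => hmaps.iterate j hr, hmaps.strictAnti_iterate hlt hr, hmeasure,
    tendsto_of_tendsto_of_tendsto_of_le_of_le tendsto_const_nhds
      (ENNReal.tendsto_div_two_pow (hμ x r hr).2.ne) (fun _ => zero_le) hmeasure⟩
end
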